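/- arXiv:1105.1838 — 8 statements merged into one kernel-verified Lean document; each statement's English description precedes it below -/
import Mathlib

section
/- For integers 0 ≤ k ≤ n, the alternative Jacobi polynomial P_{nk}^{(α,β)}(x) is a polynomial in x whose lowest-order term in x is (Γ(α+n+k+2)/((n-k)! Γ(α+2k+2))) x^k; in particular P_{nk}^{(α,β)} is divisible by x^k and the coefficient of x^k is Γ(α+n+k+2)/((n-k)! Γ(α+2k+2)). -/
/-!
By the Leibniz rule, the `(n - k)`-th derivative of `y ^ (α + n + k + 1) * (1 - y) ^ (β + n - k)`
is a combination of `y ^ (α + n + k + 1 - j) * (1 - y) ^ (β + j)`, `j ≤ n - k`. The prefactor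
`x ^ (-α - k - 1) * (1 - x) ^ (-β)` turns these into the polynomials `x ^ (n - j) * (1 - x) ^ j`,
all divisible by `x ^ k`. Only `j = n - k` contributes to the coefficient of `x ^ k`, namely the
falling factorial `(α + n + k + 1) ⋯ (α + 2k + 2) / (n - k)!`, which the functional equation of `Γ`
turns into a quotient of Gamma values.
-/

open Real MeasureTheory

/-- Falling factorial `(a)_m = a (a-1) ⋯ (a-m+1)` for real `a`. -/
noncomputable def ffall (a : ℝ) (m : ℕ) : ℝ := ∏ i ∈ Finset.range m, (a - i)

/-- Alternative Jacobi polynomials defined by the Rodrigues-type formula. -/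
noncomputable def altJacobi (α β : ℝ) (n k : ℕ) (x : ℝ) : ℝ :=
  x ^ (-α - k - 1 : ℝ) * (1 - x) ^ (-β : ℝ) / (n - k).factorial *
    iteratedDeriv (n - k)
      (fun y : ℝ => y ^ (α + n + k + 1 : ℝ) * (1 - y) ^ (β + n - k : ℝ)) x

open Polynomial Finset

namespace Real

theorem iteratedDeriv_rpow_const (r x : ℝ) (k : ℕ) :
    iteratedDeriv k (fun y : ℝ => y ^ r) x = (descPochhammer ℝ k).eval r * x ^ (r - k) := by
  rw [iteratedDeriv_eq_iterate, iter_deriv_rpow_const]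

theorem iteratedDeriv_const_sub_rpow_const (c q x : ℝ) (k : ℕ) :
    iteratedDeriv k (fun y : ℝ => (c - y) ^ q) x
      = (-1) ^ k * (descPochhammer ℝ k).eval q * (c - x) ^ (q - k) := by
  simp only [iteratedDeriv_comp_const_sub k (fun y : ℝ => y ^ q) c, iteratedDeriv_rpow_const,
    smul_eq_mul, mul_assoc]

theorem iteratedDeriv_rpow_mul_one_sub_rpow (p q : ℝ) (m : ℕ) {x : ℝ} (hx₀ : x ≠ 0)
    (hx₁ : x ≠ 1) :
    iteratedDeriv m (fun y : ℝ => y ^ p * (1 - y) ^ q) x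
      = ∑ j ∈ range (m + 1), m.choose j * (descPochhammer ℝ j).eval p
          * ((-1) ^ (m - j) * (descPochhammer ℝ (m - j)).eval q)
          * (x ^ (p - j) * (1 - x) ^ (q - (m - j : ℕ))) := by
  have hf : ContDiffAt ℝ m (fun y : ℝ => y ^ p) x := contDiffAt_rpow_const (Or.inl hx₀)
  have hg : ContDiffAt ℝ m (fun y : ℝ => (1 - y) ^ q) x :=
    (contDiffAt_rpow_const (Or.inl (sub_ne_zero.2 hx₁.symm))).comp x
      (contDiffAt_const.sub contDiffAt_id)
  rw [iteratedDeriv_fun_mul hf hg]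
  refine sum_congr rfl fun j _ => ?_
  rw [iteratedDeriv_rpow_const, iteratedDeriv_const_sub_rpow_const]
  ring

theorem Gamma_add_nat_eq_ascPochhammer_mul (m : ℕ) {s : ℝ} (hs : 0 < s) :
    Gamma (s + m) = (ascPochhammer ℝ m).eval s * Gamma s := by
  induction m with
  | zero => simp
  | succ m ih =>
    rw [Nat.cast_succ, ← add_assoc, Gamma_add_one (by positivity), ih, ascPochhammer_succ_eval]
    ring

theorem descPochhammer_eval_eq_Gamma_div (m : ℕ) {r : ℝ} (hr : 0 < r - m + 1) :
    (descPochhammer ℝ m).eval r = Gamma (r + 1) / Gamma (r - m + 1) := by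
  rw [eq_div_iff (Gamma_pos_of_pos hr).ne', descPochhammer_eval_eq_ascPochhammer,
    ← Gamma_add_nat_eq_ascPochhammer_mul m hr]
  congr 1; ring

end Real

noncomputable def altJacobiPoly (α β : ℝ) (n k : ℕ) : ℝ[X] :=
  X ^ k * ∑ j ∈ range (n - k + 1),
    C ((n - k).choose j * (descPochhammer ℝ j).eval (α + n + k + 1)
        * ((-1) ^ (n - k - j) * (descPochhammer ℝ (n - k - j)).eval (β + n - k))
        / (n - k).factorial) * X ^ (n - k - j) * (1 - X) ^ j

theorem altJacobi_eq_eval_altJacobiPoly (α β : ℝ) {n k : ℕ} (hk : k ≤ n) {x : ℝ}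
    (hx : x ∈ Set.Ioo 0 1) : altJacobi α β n k x = (altJacobiPoly α β n k).eval x := by
  obtain ⟨hx₀, hx₁⟩ := hx
  rw [altJacobi, iteratedDeriv_rpow_mul_one_sub_rpow _ _ _ hx₀.ne' hx₁.ne, altJacobiPoly,
    eval_mul, eval_finsetSum, mul_sum, mul_sum]
  refine sum_congr rfl fun j hj => ?_
  have hj : j ≤ n - k := Nat.lt_succ_iff.mp (mem_range.mp hj)
  have hxpow : x ^ (-α - k - 1) * x ^ (α + n + k + 1 - j) = x ^ k * x ^ (n - k - j) := by
    rw [← rpow_add hx₀, ← pow_add, ← rpow_natCast, Nat.cast_add, Nat.cast_sub hj,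
      Nat.cast_sub hk]
    congr 1; ring
  have hypow : (1 - x) ^ (-β) * (1 - x) ^ (β + n - k - (n - k - j : ℕ)) = (1 - x) ^ j := by
    rw [← rpow_add (sub_pos.2 hx₁), ← rpow_natCast, Nat.cast_sub hj, Nat.cast_sub hk]
    congr 1; ring
  rw [show ∀ a b c d e f : ℝ, a * b / e * (c * (d * f)) = c / e * ((a * d) * (b * f)) from
    fun _ _ _ _ _ _ => by ring, hxpow, hypow]
  simp only [eval_mul, eval_C, eval_pow, eval_X, eval_sub, eval_one]
  ring

theorem altJacobiPoly_coeff_self (α β : ℝ) (n k : ℕ) :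
    (altJacobiPoly α β n k).coeff k
      = (descPochhammer ℝ (n - k)).eval (α + n + k + 1) / (n - k).factorial := by
  rw [altJacobiPoly, coeff_X_pow_mul', if_pos le_rfl, Nat.sub_self, coeff_zero_eq_eval_zero,
    eval_finsetSum, sum_eq_single_of_mem (n - k) (self_mem_range_succ _)]
  · simp
  · intro j hj hjm
    have : 0 < n - k - j := by have := mem_range.mp hj; omega
    simp [zero_pow this.ne']

theorem stmt_1_general (n k : ℕ) (hk : k ≤ n) (α β : ℝ) (hα : α > -1) :
    ∃ Q : Polynomial ℝ,
      (∀ x ∈ Set.Ioo (0 : ℝ) 1, altJacobi α β n k x = Q.eval x) ∧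
      (Polynomial.X ^ k ∣ Q) ∧
      Q.coeff k =
        Real.Gamma (α + n + k + 2) / ((n - k).factorial * Real.Gamma (α + 2 * k + 2)) := by
  refine ⟨altJacobiPoly α β n k, fun x hx => altJacobi_eq_eval_altJacobiPoly α β hk hx,
    dvd_mul_right _ _, ?_⟩
  have hm : (α + n + k + 1) - (n - k : ℕ) + 1 = α + 2 * k + 2 := by
    rw [Nat.cast_sub hk]; ring
  have hpos : 0 < α + 2 * k + 2 := by linarith [(k.cast_nonneg : (0 : ℝ) ≤ k)]
  rw [altJacobiPoly_coeff_self, descPochhammer_eval_eq_Gamma_div _ (hm ▸ hpos), hm, div_div,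
    mul_comm, show α + n + k + 1 + 1 = α + n + k + 2 by ring]

theorem stmt_1 (n k : ℕ) (hk : k ≤ n) (α β : ℝ) (hα : α > -1) (hβ : β > -1) :
    ∃ Q : Polynomial ℝ,
      (∀ x ∈ Set.Ioo (0 : ℝ) 1, altJacobi α β n k x = Q.eval x) ∧
      (Polynomial.X ^ k ∣ Q) ∧
      Q.coeff k =
        Real.Gamma (α + n + k + 2) / ((n - k).factorial * Real.Gamma (α + 2 * k + 2)) :=
  stmt_1_general n k hk α β hα
end

section
/- For integers 0 ≤ k < l ≤ n and α, β > -1, the integral ∫₀¹ x^α (1-x)^β P_{nk}^{(α,β)}(x) x^l dx equals 0. -/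
/-!
On `(0, 1)` the `j`-th derivative of the weight `y ^ a * (1 - y) ^ b` has the form
`y ^ (a - j) * (1 - y) ^ (b - j) * Q j y` with `Q j` a polynomial, so it vanishes at both
endpoints as long as `j < a` and `j < b`. Integrating `x ^ m` against the `N`-th derivative by
parts therefore lowers `m` and `N` by one without boundary terms, and after `m + 1` steps the
monomial has been differentiated to zero. For `k < l` the integrand of the theorem is, on
`(0, 1)`, a constant times `x ^ (l - k - 1)` against the `(n - k)`-th derivative of such a weight.
-/

open Real MeasureTheory

open Set Polynomial

noncomputable def betaWeight (a b y : ℝ) : ℝ := y ^ a * (1 - y) ^ b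

-- The product rule applied to `betaWeightDeriv a b j`, after factoring out
-- `x ^ (a - j - 1) * (1 - x) ^ (b - j - 1)`.
noncomputable def betaWeightDerivPoly (a b : ℝ) : ℕ → ℝ[X]
  | 0 => 1
  | j + 1 => C (a - j) * (1 - X) * betaWeightDerivPoly a b j
      - C (b - j) * X * betaWeightDerivPoly a b j
      + X * (1 - X) * derivative (betaWeightDerivPoly a b j)

noncomputable def betaWeightDeriv (a b : ℝ) (j : ℕ) (x : ℝ) : ℝ :=
  x ^ (a - j) * (1 - x) ^ (b - j) * (betaWeightDerivPoly a b j).eval x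

section BetaWeight

variable {a b : ℝ}

theorem hasDerivAt_betaWeightDeriv (j : ℕ) {x : ℝ} (hx₀ : x ≠ 0) (hx₁ : 1 - x ≠ 0) :
    HasDerivAt (betaWeightDeriv a b j) (betaWeightDeriv a b (j + 1) x) x := by
  have hleft : HasDerivAt (fun y : ℝ => y ^ (a - j)) ((a - j) * x ^ (a - j - 1)) x :=
    hasDerivAt_rpow_const (Or.inl hx₀)
  have hright : HasDerivAt (fun y : ℝ => (1 - y) ^ (b - j))
      ((b - j) * (1 - x) ^ (b - j - 1) * (-1)) x := by
    simpa [Function.comp_def] using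
      (hasDerivAt_rpow_const (Or.inl hx₁)).comp x ((hasDerivAt_id x).const_sub 1)
  have h : HasDerivAt (betaWeightDeriv a b j) _ x :=
    (hleft.mul hright).mul ((betaWeightDerivPoly a b j).hasDerivAt x)
  convert h using 1
  have hx : x ^ (a - j) = x ^ (a - j - 1) * x := by rw [← rpow_add_one hx₀]; ring_nf
  have h1x : (1 - x) ^ (b - j) = (1 - x) ^ (b - j - 1) * (1 - x) := by
    rw [← rpow_add_one hx₁]; ring_nf
  simp only [betaWeightDeriv, betaWeightDerivPoly, Nat.cast_succ, ← sub_sub, eval_add, eval_sub,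
    eval_mul, eval_C, eval_X, eval_one, Pi.mul_apply, hx, h1x]
  ring

theorem eqOn_iteratedDeriv_betaWeight (j : ℕ) :
    EqOn (iteratedDeriv j (betaWeight a b)) (betaWeightDeriv a b j) (Ioo 0 1) := by
  induction j with
  | zero => intro x _; simp [betaWeight, betaWeightDeriv, betaWeightDerivPoly]
  | succ j ih =>
    intro x hx
    rw [iteratedDeriv_succ, ih.deriv isOpen_Ioo hx]
    exact (hasDerivAt_betaWeightDeriv j hx.1.ne' (sub_pos.2 hx.2).ne').deriv

theorem continuous_betaWeightDeriv {j : ℕ} (ha : 0 ≤ a - j) (hb : 0 ≤ b - j) :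
    Continuous (betaWeightDeriv a b j) :=
  ((continuous_rpow_const ha).mul ((continuous_rpow_const hb).comp (by fun_prop))).mul
    (betaWeightDerivPoly a b j).continuous

theorem betaWeightDeriv_apply_zero {j : ℕ} (ha : a - j ≠ 0) : betaWeightDeriv a b j 0 = 0 := by
  simp [betaWeightDeriv, zero_rpow ha]

theorem betaWeightDeriv_apply_one {j : ℕ} (hb : b - j ≠ 0) : betaWeightDeriv a b j 1 = 0 := by
  simp [betaWeightDeriv, zero_rpow hb]

theorem intervalIntegrable_pow_mul_betaWeightDeriv {j : ℕ} (m : ℕ) (ha : 0 ≤ a - j)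
    (hb : -1 < b - j) :
    IntervalIntegrable (fun x => x ^ m * betaWeightDeriv a b j x) volume 0 1 := by
  have hsing : IntervalIntegrable (fun x : ℝ => (1 - x) ^ (b - j)) volume 0 1 := by
    simpa using
      ((intervalIntegral.intervalIntegrable_rpow' (a := 0) (b := 1) hb).comp_sub_left 1).symm
  have hcont :
      Continuous fun x : ℝ => x ^ m * x ^ (a - j) * (betaWeightDerivPoly a b j).eval x :=
    ((continuous_pow m).mul (continuous_rpow_const ha)).mul (betaWeightDerivPoly a b j).continuous
  refine (hsing.mul_continuousOn hcont.continuousOn).congr fun x _ => ?_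
  simp only [betaWeightDeriv]
  ring

theorem integral_pow_mul_betaWeightDeriv_succ (m M : ℕ) (ha : (M : ℝ) + 1 ≤ a)
    (hb : (M : ℝ) < b) :
    ∫ x in (0 : ℝ)..1, x ^ m * betaWeightDeriv a b (M + 1) x
      = -(m * ∫ x in (0 : ℝ)..1, x ^ (m - 1) * betaWeightDeriv a b M x) := by
  have haM : 0 < a - M := by linarith
  have hbM : 0 < b - M := by linarith
  have hint₁ :
      IntervalIntegrable (fun x => m * (x ^ (m - 1) * betaWeightDeriv a b M x)) volume 0 1 :=
    (intervalIntegrable_pow_mul_betaWeightDeriv _ haM.le (by linarith)).const_mul _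
  have hint₂ : IntervalIntegrable (fun x => x ^ m * betaWeightDeriv a b (M + 1) x) volume 0 1 :=
    intervalIntegrable_pow_mul_betaWeightDeriv _ (by push_cast; linarith) (by push_cast; linarith)
  have hftc := intervalIntegral.integral_eq_sub_of_hasDerivAt_of_le zero_le_one
    ((continuous_pow m).mul (continuous_betaWeightDeriv haM.le hbM.le)).continuousOn
    (fun x hx => ((hasDerivAt_pow m x).mul
      (hasDerivAt_betaWeightDeriv M hx.1.ne' (sub_pos.2 hx.2).ne')).congr_deriv (by ring))
    (hint₁.add hint₂)
  rw [intervalIntegral.integral_add hint₁ hint₂, intervalIntegral.integral_const_mul,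
    Pi.mul_apply, Pi.mul_apply, betaWeightDeriv_apply_zero haM.ne',
    betaWeightDeriv_apply_one hbM.ne'] at hftc
  linarith

theorem integral_pow_mul_betaWeightDeriv_eq_zero {m N : ℕ} (hmN : m < N) (ha : (N : ℝ) ≤ a)
    (hb : (N : ℝ) - 1 < b) : ∫ x in (0 : ℝ)..1, x ^ m * betaWeightDeriv a b N x = 0 := by
  induction m generalizing N with
  | zero =>
    obtain ⟨M, rfl⟩ : ∃ M, N = M + 1 := ⟨N - 1, by omega⟩
    push_cast at ha hb
    rw [integral_pow_mul_betaWeightDeriv_succ 0 M (by linarith) (by linarith)]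
    simp
  | succ m ih =>
    obtain ⟨M, rfl⟩ : ∃ M, N = M + 1 := ⟨N - 1, by omega⟩
    push_cast at ha hb
    rw [integral_pow_mul_betaWeightDeriv_succ (m + 1) M (by linarith) (by linarith),
      Nat.add_sub_cancel, ih (by omega) (by linarith) (by linarith), mul_zero, neg_zero]

theorem integral_pow_mul_iteratedDeriv_betaWeight_eq_zero {m N : ℕ} (hmN : m < N)
    (ha : (N : ℝ) ≤ a) (hb : (N : ℝ) - 1 < b) :
    ∫ x in (0 : ℝ)..1, x ^ m * iteratedDeriv N (betaWeight a b) x = 0 := by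
  rw [intervalIntegral.integral_congr_Ioo_of_le zero_le_one
    fun x hx => by rw [eqOn_iteratedDeriv_betaWeight N hx]]
  exact integral_pow_mul_betaWeightDeriv_eq_zero hmN ha hb

end BetaWeight

theorem weight_mul_altJacobi_mul_pow (α β : ℝ) {n k l : ℕ} (hkl : k < l) {x : ℝ}
    (hx : x ∈ Ioo 0 1) :
    x ^ α * (1 - x) ^ β * altJacobi α β n k x * x ^ l
      = ((n - k).factorial : ℝ)⁻¹ *
        (x ^ (l - k - 1) * iteratedDeriv (n - k) (betaWeight (α + n + k + 1) (β + n - k)) x) := by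
  have hx₀ : 0 < x := hx.1
  have hx₁ : 0 < 1 - x := sub_pos.2 hx.2
  have hpow : x ^ α * x ^ (-α - k - 1) * x ^ l = x ^ (l - k - 1) := by
    rw [← rpow_add hx₀, ← rpow_natCast, ← rpow_add hx₀, ← rpow_natCast]
    congr 1
    push_cast [Nat.sub_sub, Nat.cast_sub (show k + 1 ≤ l by omega)]
    ring
  have hone : (1 - x) ^ β * (1 - x) ^ (-β) = 1 := by rw [← rpow_add hx₁]; simp
  set D := iteratedDeriv (n - k) (betaWeight (α + n + k + 1) (β + n - k)) x
  change _ * (_ / _ * D) * _ = _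
  linear_combination ((1 - x) ^ β * (1 - x) ^ (-β) * D / (n - k).factorial) * hpow
    + (x ^ (l - k - 1) * D / (n - k).factorial) * hone

theorem stmt_2 (n k l : ℕ) (hkl : k < l) (hl : l ≤ n) (α β : ℝ) (hα : α > -1) (hβ : β > -1) :
    ∫ x in (0 : ℝ)..1,
      x ^ α * (1 - x) ^ β * altJacobi α β n k x * x ^ l = 0 := by
  have hkn : k ≤ n := (hkl.trans_le hl).le
  rw [intervalIntegral.integral_congr_Ioo_of_le zero_le_one
      fun x hx => weight_mul_altJacobi_mul_pow α β hkl hx,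
    intervalIntegral.integral_const_mul,
    integral_pow_mul_iteratedDeriv_betaWeight_eq_zero (by omega), mul_zero]
  · push_cast [Nat.cast_sub hkn]
    linarith [(Nat.cast_nonneg k : (0 : ℝ) ≤ k)]
  · push_cast [Nat.cast_sub hkn]
    linarith
end

section
/- For integers 0 ≤ k, l ≤ n with k ≠ l and real α, β > -1, the alternative Jacobi polynomials are orthogonal on [0,1] with weight x^α(1-x)^β: ∫₀¹ x^α (1-x)^β P_{nk}^{(α,β)}(x) P_{nl}^{(α,β)}(x) dx = 0. -/
/-! For `k < l`, the polynomial `P_{nl}` is `x^l q(x)` with `deg q ≤ n - l`, while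
`x^α (1-x)^β P_{nk} x^{k+1}` is the Rodrigues derivative `D^{n-k}[x^{α+n+k+1} (1-x)^{β+n-k}]`
up to a constant. The integrand is therefore a polynomial of degree `< n - k` times an
`(n - k)`-th derivative, and integrating by parts `n - k` times kills it: each
`D^j[x^c (1-x)^d]` with `j < n - k` is `x^{c-j} (1-x)^{d-j}` times a polynomial, with positive
exponents, so all boundary terms vanish. -/

open Real MeasureTheory

open Polynomial Set

noncomputable def rodriguesStep (c d : ℝ) (q : ℝ[X]) : ℝ[X] :=
  (C c * (1 - X) - C d * X) * q + X * (1 - X) * derivative q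

lemma natDegree_rodriguesStep_le {c d : ℝ} {q : ℝ[X]} {j : ℕ} (hq : q.natDegree ≤ j) :
    (rodriguesStep c d q).natDegree ≤ j + 1 := by
  have h₁ : (C c * (1 - X) - C d * X : ℝ[X]).natDegree ≤ 1 := by compute_degree
  have h₂ : (X * (1 - X) : ℝ[X]).natDegree ≤ 2 := by compute_degree
  refine natDegree_add_le_of_degree_le (natDegree_mul_le.trans (by omega)) ?_
  rcases Nat.eq_zero_or_pos q.natDegree with h₀ | h₀
  · simp [derivative_of_natDegree_zero h₀]
  · exact natDegree_mul_le.trans (by have := natDegree_derivative_le q; omega)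

lemma hasDerivAt_rpow_mul_one_sub_rpow_mul_eval (c d : ℝ) (q : ℝ[X]) {x : ℝ}
    (hx : x ∈ Ioo (0 : ℝ) 1) :
    HasDerivAt (fun y => y ^ c * (1 - y) ^ d * q.eval y)
      (x ^ (c - 1) * (1 - x) ^ (d - 1) * (rodriguesStep c d q).eval x) x := by
  have hx₀ : 0 < x := hx.1
  have hx₁ : 0 < 1 - x := sub_pos.2 hx.2
  have hpow : HasDerivAt (fun y : ℝ => y ^ c) (c * x ^ (c - 1)) x :=
    hasDerivAt_rpow_const (Or.inl hx₀.ne')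
  have hpow' : HasDerivAt (fun y : ℝ => (1 - y) ^ d) (d * (1 - x) ^ (d - 1) * (-1)) x :=
    (hasDerivAt_rpow_const (Or.inl hx₁.ne')).comp x ((hasDerivAt_id x).const_sub 1)
  refine ((hpow.mul hpow').mul (q.hasDerivAt x)).congr_deriv ?_
  simp only [rodriguesStep, Pi.mul_apply, eval_add, eval_mul, eval_sub, eval_C, eval_X, eval_one]
  rw [rpow_sub_one hx₀.ne', rpow_sub_one hx₁.ne']
  field_simp
  ring

lemma iteratedDeriv_succ_eq_deriv_of_eqOn {f g : ℝ → ℝ} {s : Set ℝ} {j : ℕ} {x : ℝ}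
    (hs : IsOpen s) (h : EqOn (iteratedDeriv j f) g s) (hx : x ∈ s) :
    iteratedDeriv (j + 1) f x = deriv g x := by
  rw [iteratedDeriv_succ]
  exact Filter.EventuallyEq.deriv_eq (Filter.eventuallyEq_of_mem (hs.mem_nhds hx) h)

lemma exists_eqOn_iteratedDeriv_rpow_mul_one_sub_rpow (c d : ℝ) (j : ℕ) :
    ∃ q : ℝ[X], q.natDegree ≤ j ∧ EqOn (iteratedDeriv j fun y => y ^ c * (1 - y) ^ d)
      (fun x => x ^ (c - j) * (1 - x) ^ (d - j) * q.eval x) (Ioo 0 1) := by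
  induction j with
  | zero => exact ⟨1, by simp, fun x _ => by simp⟩
  | succ j ih =>
    obtain ⟨q, hq_deg, hq⟩ := ih
    refine ⟨rodriguesStep (c - j) (d - j) q, natDegree_rodriguesStep_le hq_deg, fun x hx => ?_⟩
    rw [iteratedDeriv_succ_eq_deriv_of_eqOn isOpen_Ioo hq hx,
      (hasDerivAt_rpow_mul_one_sub_rpow_mul_eval _ _ q hx).deriv]
    push_cast
    ring_nf

lemma intervalIntegrable_rpow_mul_one_sub_rpow {a b : ℝ} (ha : -1 < a) (hb : -1 < b) :
    IntervalIntegrable (fun x : ℝ => x ^ a * (1 - x) ^ b) volume 0 1 := by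
  have hbeta := (Complex.betaIntegral_convergent (u := a + 1) (v := b + 1)
    (by simp; linarith) (by simp; linarith)).norm
  refine hbeta.congr_uIoo fun x hx => ?_
  rw [uIoo_of_le zero_le_one] at hx
  have hx₁ : 0 < 1 - x := sub_pos.2 hx.2
  simp only [norm_mul, add_sub_cancel_right]
  rw [Complex.norm_cpow_eq_rpow_re_of_pos hx.1, ← Complex.ofReal_one, ← Complex.ofReal_sub,
    Complex.norm_cpow_eq_rpow_re_of_pos hx₁]
  simp

theorem integral_eval_mul_iteratedDeriv_rpow_mul_one_sub_rpow {c d : ℝ} {m : ℕ}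
    (hc : -1 < c - m) (hd : -1 < d - m) {p : ℝ[X]} (hp : p.natDegree < m) :
    ∫ x in (0 : ℝ)..1, p.eval x * iteratedDeriv m (fun y => y ^ c * (1 - y) ^ d) x = 0 := by
  induction m generalizing p with
  | zero => exact absurd hp (Nat.not_lt_zero _)
  | succ m ih =>
    push_cast at hc hd
    obtain ⟨q, -, hq⟩ := exists_eqOn_iteratedDeriv_rpow_mul_one_sub_rpow c d m
    set G : ℝ → ℝ := fun x => x ^ (c - m) * (1 - x) ^ (d - m) * q.eval x
    set r := rodriguesStep (c - m) (d - m) q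
    have hG' : ∀ x ∈ Ioo (0 : ℝ) 1,
        HasDerivAt G (x ^ (c - m - 1) * (1 - x) ^ (d - m - 1) * r.eval x) x :=
      fun x hx => hasDerivAt_rpow_mul_one_sub_rpow_mul_eval _ _ q hx
    have hG_cont : Continuous G :=
      ((continuous_rpow_const (by linarith)).mul ((continuous_rpow_const (by linarith)).comp
        (continuous_const.sub continuous_id))).mul q.continuous
    have hG₀ : G 0 = 0 := by simp [G, zero_rpow (by linarith : c - m ≠ 0)]
    have hG₁ : G 1 = 0 := by simp [G, zero_rpow (by linarith : d - m ≠ 0)]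
    calc ∫ x in (0 : ℝ)..1, p.eval x * iteratedDeriv (m + 1) (fun y => y ^ c * (1 - y) ^ d) x
        = ∫ x in (0 : ℝ)..1, p.eval x * (x ^ (c - m - 1) * (1 - x) ^ (d - m - 1) * r.eval x) :=
          intervalIntegral.integral_congr_Ioo_of_le zero_le_one fun x hx => by
            rw [iteratedDeriv_succ_eq_deriv_of_eqOn isOpen_Ioo hq hx, (hG' x hx).deriv]
      _ = p.eval 1 * G 1 - p.eval 0 * G 0 - ∫ x in (0 : ℝ)..1, (derivative p).eval x * G x :=
          intervalIntegral.integral_mul_deriv_eq_deriv_mul_of_hasDerivAt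
            p.continuous.continuousOn hG_cont.continuousOn (fun x _ => p.hasDerivAt x)
            (fun x hx => hG' x (by simpa using hx))
            ((derivative p).continuous.intervalIntegrable _ _)
            ((intervalIntegrable_rpow_mul_one_sub_rpow (by linarith) (by linarith)).mul_continuousOn
              r.continuous.continuousOn)
      _ = -∫ x in (0 : ℝ)..1,
            (derivative p).eval x * iteratedDeriv m (fun y => y ^ c * (1 - y) ^ d) x := by
          rw [hG₀, hG₁, intervalIntegral.integral_congr_Ioo_of_le zero_le_one
            fun x hx => congrArg ((derivative p).eval x * ·) (hq hx).symm]
          ring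
      _ = 0 := by
          rcases eq_or_ne p.natDegree 0 with h₀ | h₀
          · simp [derivative_of_natDegree_zero h₀]
          · rw [ih (by linarith) (by linarith) ((natDegree_derivative_lt h₀).trans_le (by omega)),
              neg_zero]

lemma rpow_mul_one_sub_rpow_mul_altJacobi_mul_pow (α β : ℝ) (n k : ℕ) {x : ℝ}
    (hx : x ∈ Ioo (0 : ℝ) 1) :
    x ^ α * (1 - x) ^ β * altJacobi α β n k x * x ^ (k + 1) =
      iteratedDeriv (n - k) (fun y : ℝ => y ^ (α + n + k + 1 : ℝ) * (1 - y) ^ (β + n - k : ℝ)) x /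
        (n - k).factorial := by
  have hx₀ : 0 < x := hx.1
  have hx₁ : 0 < 1 - x := sub_pos.2 hx.2
  have hxpow : x ^ α * x ^ (-α - k - 1 : ℝ) * x ^ (k + 1) = 1 := by
    rw [← rpow_add hx₀, ← rpow_natCast, ← rpow_add hx₀]
    push_cast
    ring_nf
    exact rpow_zero x
  have hxpow' : (1 - x) ^ β * (1 - x) ^ (-β) = 1 := by
    rw [← rpow_add hx₁, add_neg_cancel, rpow_zero]
  rw [altJacobi]
  linear_combination (iteratedDeriv (n - k)
      (fun y : ℝ => y ^ (α + n + k + 1 : ℝ) * (1 - y) ^ (β + n - k : ℝ)) x / (n - k).factorial) *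
    ((1 - x) ^ β * (1 - x) ^ (-β) * hxpow + hxpow')

lemma exists_natDegree_le_eqOn_altJacobi (α β : ℝ) {n l : ℕ} (hl : l ≤ n) :
    ∃ q : ℝ[X], q.natDegree ≤ n - l ∧
      EqOn (altJacobi α β n l) (fun x => x ^ l * q.eval x) (Ioo 0 1) := by
  obtain ⟨q, hq_deg, hq⟩ :=
    exists_eqOn_iteratedDeriv_rpow_mul_one_sub_rpow (α + n + l + 1) (β + n - l) (n - l)
  refine ⟨C ((n - l).factorial : ℝ)⁻¹ * q, natDegree_C_mul_le _ _ |>.trans hq_deg,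
    fun x hx => ?_⟩
  have hx₀ : 0 < x := hx.1
  have hx₁ : 0 < 1 - x := sub_pos.2 hx.2
  have hxpow : x ^ (-α - l - 1 : ℝ) * x ^ (α + n + l + 1 - (n - l : ℕ) : ℝ) = x ^ l := by
    rw [← rpow_add hx₀, ← rpow_natCast, Nat.cast_sub hl]
    ring_nf
  have hxpow' : (1 - x) ^ (-β) * (1 - x) ^ (β + n - l - (n - l : ℕ) : ℝ) = 1 := by
    rw [← rpow_add hx₁, Nat.cast_sub hl]
    ring_nf
    exact rpow_zero _
  simp only [altJacobi, hq hx, eval_mul, eval_C]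
  linear_combination (q.eval x / (n - l).factorial) *
    ((1 - x) ^ (-β) * (1 - x) ^ (β + n - l - (n - l : ℕ) : ℝ) * hxpow + x ^ l * hxpow')

theorem stmt_3 (n k l : ℕ) (hk : k ≤ n) (hl : l ≤ n) (hkl : k ≠ l)
    (α β : ℝ) (hα : α > -1) (hβ : β > -1) :
    ∫ x in (0 : ℝ)..1,
      x ^ α * (1 - x) ^ β * altJacobi α β n k x * altJacobi α β n l x = 0 := by
  wlog hlt : k < l generalizing k l
  · simpa only [mul_right_comm _ (altJacobi α β n k _)] using
      this l k hl hk hkl.symm (by omega)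
  obtain ⟨q, hq_deg, hq⟩ := exists_natDegree_le_eqOn_altJacobi α β hl
  have hdeg : (X ^ (l - k - 1) * q).natDegree < n - k :=
    natDegree_mul_le.trans_lt (by rw [natDegree_X_pow]; omega)
  calc ∫ x in (0 : ℝ)..1,
        x ^ α * (1 - x) ^ β * altJacobi α β n k x * altJacobi α β n l x
      = ∫ x in (0 : ℝ)..1, ((n - k).factorial : ℝ)⁻¹ * ((X ^ (l - k - 1) * q).eval x *
          iteratedDeriv (n - k)
            (fun y : ℝ => y ^ (α + n + k + 1 : ℝ) * (1 - y) ^ (β + n - k : ℝ)) x) :=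
        intervalIntegral.integral_congr_Ioo_of_le zero_le_one fun x hx => by
          have hsplit : x ^ l = x ^ (k + 1) * x ^ (l - k - 1) := by rw [← pow_add]; congr 1; omega
          simp only [hq hx, hsplit, eval_mul, eval_pow, eval_X]
          linear_combination (x ^ (l - k - 1) * q.eval x) *
            rpow_mul_one_sub_rpow_mul_altJacobi_mul_pow α β n k hx
    _ = 0 := by
      rw [intervalIntegral.integral_const_mul,
        integral_eval_mul_iteratedDeriv_rpow_mul_one_sub_rpow _ _ hdeg, mul_zero]
      · rw [Nat.cast_sub hk]; linarith [(k.cast_nonneg : (0 : ℝ) ≤ k)]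
      · rw [Nat.cast_sub hk]; linarith
end

section
/- For integers 0 ≤ k ≤ n and α, β > -1, the squared norm of the alternative Jacobi polynomial is ∫₀¹ x^α (1-x)^β (P_{nk}^{(α,β)}(x))² dx = (1/(α+2k+1)) · Γ(α+n+k+2) Γ(β+n-k+1) / ((n-k)! Γ(α+β+n+k+2)). -/
/-!
Put `A = α + n + k + 1`, `B = β + n - k` and `m = n - k`. The `m`-th derivative of
`x ^ A * (1 - x) ^ B` is `x ^ (A - m) * (1 - x) ^ (B - m) * q x` for a polynomial `q` of degree at
most `m` with `q 0 = A (A - 1) ⋯ (A - m + 1)`. Hence the integrand is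
`(m!)⁻² * g x * D^m (x ^ A * (1 - x) ^ B)` with `g x = q x / x`, and `m` integrations by parts move
all derivatives onto `g`. The boundary terms vanish because every function involved is a finite
combination of `x ^ e * (1 - x) ^ f` with exponents bounded below, and differentiation lowers these
bounds by one. Only the pole `q 0 / x` of `g` survives `m` differentiations, so
`D^m g x = (-1) ^ m * m! * q 0 * x ^ (-m - 1)`, and a Beta integral finishes the computation.
-/

open Real MeasureTheory

open Set Filter Topology Polynomial
open scoped Nat

lemma ffall_succ (a : ℝ) (m : ℕ) : ffall a (m + 1) = ffall a m * (a - m) :=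
  Finset.prod_range_succ _ _

lemma ffall_mul_Gamma {a : ℝ} {m : ℕ} (h : 0 < a + 1 - m) :
    ffall a m * Gamma (a + 1 - m) = Gamma (a + 1) := by
  induction m with
  | zero => simp [ffall]
  | succ m ih =>
    push_cast at h
    rw [ffall_succ, show a + 1 - ((m + 1 : ℕ) : ℝ) = a - m by push_cast; ring, mul_assoc,
      ← Gamma_add_one (by linarith : 0 < a - m).ne', ← ih (by linarith)]
    ring_nf

lemma ffall_mul_Gamma_sub {a : ℝ} {m : ℕ} (h : 0 < a - m) :
    ffall a m * Gamma (a - m) = Gamma (a + 1) / (a - m) := by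
  rw [eq_div_iff h.ne', mul_assoc, mul_comm (Gamma _), ← Gamma_add_one h.ne',
    show a - m + 1 = a + 1 - m by ring, ffall_mul_Gamma (by linarith)]

noncomputable def jacobiWeight (a b x : ℝ) : ℝ := x ^ a * (1 - x) ^ b

section JacobiWeight

variable {a b c d x : ℝ}

lemma jacobiWeight_mul (hx : x ∈ Ioo 0 1) :
    jacobiWeight a b x * jacobiWeight c d x = jacobiWeight (a + c) (b + d) x := by
  simp only [jacobiWeight, rpow_add hx.1, rpow_add (sub_pos.2 hx.2)]
  ring

lemma jacobiWeight_add_one_left (hx : x ∈ Ioo 0 1) :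
    jacobiWeight (a + 1) b x = x * jacobiWeight a b x := by
  simp only [jacobiWeight, rpow_add_one hx.1.ne']
  ring

lemma jacobiWeight_add_one_right (hx : x ∈ Ioo 0 1) :
    jacobiWeight a (b + 1) x = (1 - x) * jacobiWeight a b x := by
  simp only [jacobiWeight, rpow_add_one (sub_pos.2 hx.2).ne']
  ring

lemma hasDerivAt_jacobiWeight (a b : ℝ) (hx : x ∈ Ioo 0 1) :
    HasDerivAt (jacobiWeight a b)
      (a * jacobiWeight (a - 1) b x - b * jacobiWeight a (b - 1) x) x := by
  have hxa := hasDerivAt_rpow_const (p := a) (Or.inl hx.1.ne')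
  have hxb := ((hasDerivAt_id x).const_sub 1).rpow_const (p := b) (Or.inl (sub_pos.2 hx.2).ne')
  refine (hxa.mul hxb).congr_deriv ?_
  simp only [jacobiWeight, id]
  ring

lemma tendsto_jacobiWeight_nhdsGT_zero (b : ℝ) (ha : 0 < a) :
    Tendsto (jacobiWeight a b) (𝓝[>] 0) (𝓝 0) := by
  have hcont : ContinuousAt (jacobiWeight a b) 0 :=
    (continuousAt_id.rpow_const (Or.inr ha.le)).mul
      ((continuousAt_const.sub continuousAt_id).rpow_const (Or.inl (by norm_num)))
  simpa [jacobiWeight, zero_rpow ha.ne'] using hcont.tendsto.mono_left nhdsWithin_le_nhds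

lemma tendsto_jacobiWeight_nhdsLT_one (a : ℝ) (hb : 0 < b) :
    Tendsto (jacobiWeight a b) (𝓝[<] 1) (𝓝 0) := by
  have hcont : ContinuousAt (jacobiWeight a b) 1 :=
    (continuousAt_id.rpow_const (Or.inl (by norm_num))).mul
      ((continuousAt_const.sub continuousAt_id).rpow_const (Or.inr hb.le))
  simpa [jacobiWeight, zero_rpow hb.ne'] using hcont.tendsto.mono_left nhdsWithin_le_nhds

lemma ofReal_jacobiWeight (hx : x ∈ Ioo 0 1) :
    ((jacobiWeight a b x : ℝ) : ℂ) =
      (x : ℂ) ^ (((a + 1 : ℝ) : ℂ) - 1) * (1 - (x : ℂ)) ^ (((b + 1 : ℝ) : ℂ) - 1) := by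
  rw [jacobiWeight, Complex.ofReal_mul, Complex.ofReal_cpow hx.1.le,
    Complex.ofReal_cpow (sub_pos.2 hx.2).le]
  push_cast
  ring_nf

lemma intervalIntegrable_jacobiWeight (ha : -1 < a) (hb : -1 < b) :
    IntervalIntegrable (jacobiWeight a b) volume 0 1 := by
  have hC := Complex.betaIntegral_convergent (u := ((a + 1 : ℝ) : ℂ)) (v := ((b + 1 : ℝ) : ℂ))
    (by simp; linarith) (by simp; linarith)
  have hR : IntervalIntegrable (fun x => ((jacobiWeight a b x : ℝ) : ℂ)) volume 0 1 :=
    hC.congr_uIoo fun x hx => (ofReal_jacobiWeight (by simpa using hx)).symm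
  exact ⟨hR.1.re, hR.2.re⟩

lemma integral_jacobiWeight (ha : -1 < a) (hb : -1 < b) :
    ∫ x in 0..1, jacobiWeight a b x = Gamma (a + 1) * Gamma (b + 1) / Gamma (a + b + 2) := by
  have hB := Complex.Gamma_mul_Gamma_eq_betaIntegral (s := ((a + 1 : ℝ) : ℂ))
    (t := ((b + 1 : ℝ) : ℂ)) (by simp; linarith) (by simp; linarith)
  rw [Complex.betaIntegral, ← intervalIntegral.integral_congr_uIoo
      fun x hx => ofReal_jacobiWeight (a := a) (b := b) (by simpa using hx),
    intervalIntegral.integral_ofReal, ← Complex.ofReal_add,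
    show a + 1 + (b + 1) = a + b + 2 by ring] at hB
  simp only [Complex.Gamma_ofReal] at hB
  norm_cast at hB
  rw [hB, mul_div_cancel_left₀ _ (Gamma_pos_of_pos (by linarith)).ne']

end JacobiWeight

def IsBetaSum (E F : ℝ) (g : ℝ → ℝ) : Prop :=
  ∃ (ι : Type) (_ : Fintype ι) (c e f : ι → ℝ), (∀ i, E ≤ e i ∧ F ≤ f i) ∧
    EqOn g (fun x => ∑ i, c i * jacobiWeight (e i) (f i) x) (Ioo 0 1)

lemma isBetaSum_jacobiWeight (a b : ℝ) : IsBetaSum a b (jacobiWeight a b) :=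
  ⟨Unit, inferInstance, fun _ => 1, fun _ => a, fun _ => b, fun _ => ⟨le_rfl, le_rfl⟩,
    fun x _ => by simp⟩

namespace IsBetaSum

variable {E F E' F' : ℝ} {g h : ℝ → ℝ}

lemma congr (hg : IsBetaSum E F g) (hgh : EqOn g h (Ioo 0 1)) : IsBetaSum E F h := by
  obtain ⟨ι, _, c, e, f, hef, hg⟩ := hg
  exact ⟨ι, inferInstance, c, e, f, hef, hgh.symm.trans hg⟩

lemma mul (hg : IsBetaSum E F g) (hh : IsBetaSum E' F' h) :
    IsBetaSum (E + E') (F + F') (g * h) := by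
  obtain ⟨ι, _, c, e, f, hef, hg⟩ := hg
  obtain ⟨κ, _, c', e', f', hef', hh⟩ := hh
  refine ⟨ι × κ, inferInstance, fun p => c p.1 * c' p.2, fun p => e p.1 + e' p.2,
    fun p => f p.1 + f' p.2, fun p => ⟨add_le_add (hef p.1).1 (hef' p.2).1,
      add_le_add (hef p.1).2 (hef' p.2).2⟩, fun x hx => ?_⟩
  simp only [Pi.mul_apply, hg hx, hh hx, Fintype.sum_mul_sum, Fintype.sum_prod_type,
    ← jacobiWeight_mul hx]
  exact Finset.sum_congr rfl fun i _ => Finset.sum_congr rfl fun j _ => by ring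

lemma exists_hasDerivAt (hg : IsBetaSum E F g) :
    ∃ g', IsBetaSum (E - 1) (F - 1) g' ∧ ∀ x ∈ Ioo 0 1, HasDerivAt g (g' x) x := by
  obtain ⟨ι, _, c, e, f, hef, hg⟩ := hg
  refine ⟨fun x => ∑ i, c i * (e i * jacobiWeight (e i - 1) (f i) x -
    f i * jacobiWeight (e i) (f i - 1) x), ⟨ι ⊕ ι, inferInstance,
    Sum.elim (fun i => c i * e i) fun i => -(c i * f i), Sum.elim (fun i => e i - 1) e,
    Sum.elim f fun i => f i - 1, ?_, fun x _ => ?_⟩, fun x hx => ?_⟩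
  · rintro (i | i) <;> simp only [Sum.elim_inl, Sum.elim_inr] <;> constructor <;>
      linarith [hef i]
  · simp only [Fintype.sum_sum_type, Sum.elim_inl, Sum.elim_inr, ← Finset.sum_add_distrib]
    exact Finset.sum_congr rfl fun i _ => by ring
  · refine (HasDerivAt.fun_sum fun i _ => (hasDerivAt_jacobiWeight (e i) (f i) hx).const_mul
      (c i)).congr_of_eventuallyEq (hg.eventuallyEq_of_mem (Ioo_mem_nhds hx.1 hx.2))

lemma differentiableAt (hg : IsBetaSum E F g) {x : ℝ} (hx : x ∈ Ioo 0 1) :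
    DifferentiableAt ℝ g x :=
  let ⟨_, _, hg'⟩ := hg.exists_hasDerivAt
  (hg' x hx).differentiableAt

lemma deriv (hg : IsBetaSum E F g) : IsBetaSum (E - 1) (F - 1) (deriv g) :=
  let ⟨_, hbeta, hg'⟩ := hg.exists_hasDerivAt
  hbeta.congr fun x hx => (hg' x hx).deriv.symm

lemma iteratedDeriv (hg : IsBetaSum E F g) (n : ℕ) :
    IsBetaSum (E - n) (F - n) (iteratedDeriv n g) := by
  induction n with
  | zero => simpa using hg
  | succ n ih => simpa only [iteratedDeriv_succ, Nat.cast_succ, sub_sub] using ih.deriv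

lemma intervalIntegrable (hg : IsBetaSum E F g) (hE : -1 < E) (hF : -1 < F) :
    IntervalIntegrable g volume 0 1 := by
  obtain ⟨ι, _, c, e, f, hef, hg⟩ := hg
  refine (IntervalIntegrable.sum Finset.univ fun i _ =>
    (intervalIntegrable_jacobiWeight (hE.trans_le (hef i).1)
      (hF.trans_le (hef i).2)).const_mul (c i)).congr_uIoo fun x hx => ?_
  rw [uIoo_of_le zero_le_one] at hx
  simp [hg hx]

lemma tendsto_nhdsGT_zero (hg : IsBetaSum E F g) (hE : 0 < E) :
    Tendsto g (𝓝[>] 0) (𝓝 0) := by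
  obtain ⟨ι, _, c, e, f, hef, hg⟩ := hg
  have hsum := tendsto_finsetSum Finset.univ fun i _ =>
    (tendsto_jacobiWeight_nhdsGT_zero (f i) (hE.trans_le (hef i).1)).const_mul (c i)
  simp only [mul_zero, Finset.sum_const_zero] at hsum
  exact hsum.congr' (hg.eventuallyEq_of_mem (Ioo_mem_nhdsGT one_pos)).symm

lemma tendsto_nhdsLT_one (hg : IsBetaSum E F g) (hF : 0 < F) :
    Tendsto g (𝓝[<] 1) (𝓝 0) := by
  obtain ⟨ι, _, c, e, f, hef, hg⟩ := hg
  have hsum := tendsto_finsetSum Finset.univ fun i _ =>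
    (tendsto_jacobiWeight_nhdsLT_one (e i) (hF.trans_le (hef i).2)).const_mul (c i)
  simp only [mul_zero, Finset.sum_const_zero] at hsum
  exact hsum.congr' (hg.eventuallyEq_of_mem (Ioo_mem_nhdsLT one_pos)).symm

lemma integral_mul_deriv (hg : IsBetaSum E F g) (hh : IsBetaSum E' F' h)
    (hE : 0 < E + E') (hF : 0 < F + F') :
    ∫ x in 0..1, g x * _root_.deriv h x = -∫ x in 0..1, _root_.deriv g x * h x := by
  have hint₁ : IntervalIntegrable (fun x => _root_.deriv g x * h x) volume 0 1 :=
    (hg.deriv.mul hh).intervalIntegrable (by linarith) (by linarith)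
  have hint₂ : IntervalIntegrable (fun x => g x * _root_.deriv h x) volume 0 1 :=
    (hg.mul hh.deriv).intervalIntegrable (by linarith) (by linarith)
  have hFTC := intervalIntegral.integral_eq_sub_of_hasDerivAt_of_tendsto zero_lt_one
    (fun x hx => (hg.differentiableAt hx).hasDerivAt.mul (hh.differentiableAt hx).hasDerivAt)
    (hint₁.add hint₂) ((hg.mul hh).tendsto_nhdsGT_zero hE) ((hg.mul hh).tendsto_nhdsLT_one hF)
  rw [intervalIntegral.integral_add hint₁ hint₂, sub_zero] at hFTC
  linarith

lemma integral_mul_iteratedDeriv {a b c d : ℝ} {f : ℝ → ℝ} (hf : IsBetaSum a b f)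
    (hg : IsBetaSum c d g) (m : ℕ) (hac : -1 < a + c - m) (hbd : -1 < b + d - m) :
    ∫ x in 0..1, g x * _root_.iteratedDeriv m f x =
      (-1) ^ m * ∫ x in 0..1, _root_.iteratedDeriv m g x * f x := by
  induction m generalizing a b f with
  | zero => simp
  | succ m ih =>
    push_cast at hac hbd
    rw [iteratedDeriv_succ' (f := f), ih hf.deriv (by linarith) (by linarith),
      (hg.iteratedDeriv m).integral_mul_deriv hf (by linarith) (by linarith),
      iteratedDeriv_succ (f := g), pow_succ]
    ring

end IsBetaSum

-- From `(x^a (1-x)^b q)' = x^(a-1) (1-x)^(b-1) (a (1-x) q - b x q + x (1-x) q')`.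
noncomputable def rodriguesPoly (a b : ℝ) : ℕ → ℝ[X]
  | 0 => 1
  | i + 1 => (C (a - i) * (1 - X) - C (b - i) * X) * rodriguesPoly a b i +
      X * (1 - X) * derivative (rodriguesPoly a b i)

lemma natDegree_rodriguesPoly_le (a b : ℝ) (i : ℕ) : (rodriguesPoly a b i).natDegree ≤ i := by
  induction i with
  | zero => simp [rodriguesPoly]
  | succ i ih =>
    have hlin : (C (a - i) * (1 - X) - C (b - i) * X : ℝ[X]).natDegree ≤ 1 := by compute_degree
    have hquad : (X * (1 - X) : ℝ[X]).natDegree ≤ 2 := by compute_degree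
    have hder := natDegree_derivative_le (rodriguesPoly a b i)
    refine (natDegree_add_le _ _).trans (max_le (natDegree_mul_le.trans (by omega)) ?_)
    rcases i with _ | i
    · simp [rodriguesPoly]
    · exact natDegree_mul_le.trans (by omega)

lemma rodriguesPoly_eval_zero (a b : ℝ) (i : ℕ) : (rodriguesPoly a b i).eval 0 = ffall a i := by
  induction i with
  | zero => simp [rodriguesPoly, ffall]
  | succ i ih => simp [rodriguesPoly, ih, ffall_succ, mul_comm]

lemma iteratedDeriv_jacobiWeight (a b : ℝ) (i : ℕ) {x : ℝ} (hx : x ∈ Ioo 0 1) :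
    iteratedDeriv i (jacobiWeight a b) x =
      jacobiWeight (a - i) (b - i) x * (rodriguesPoly a b i).eval x := by
  induction i generalizing x with
  | zero => simp [rodriguesPoly]
  | succ i ih =>
    have hloc : iteratedDeriv i (jacobiWeight a b) =ᶠ[𝓝 x]
        fun y => jacobiWeight (a - i) (b - i) y * (rodriguesPoly a b i).eval y :=
      eventually_of_mem (Ioo_mem_nhds hx.1 hx.2) fun y hy => ih hy
    rw [iteratedDeriv_succ, hloc.deriv_eq,
      ((hasDerivAt_jacobiWeight _ _ hx).fun_mul ((rodriguesPoly a b i).hasDerivAt x)).deriv]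
    set p := a - ((i + 1 : ℕ) : ℝ)
    set q := b - ((i + 1 : ℕ) : ℝ)
    have hp : a - i = p + 1 := by push_cast [p]; ring
    have hq : b - i = q + 1 := by push_cast [q]; ring
    rw [hp, hq, add_sub_cancel_right, add_sub_cancel_right, jacobiWeight_add_one_left hx,
      jacobiWeight_add_one_right hx, jacobiWeight_add_one_left hx,
      jacobiWeight_add_one_right hx]
    simp only [rodriguesPoly, eval_add, eval_mul, eval_sub, eval_C, eval_one, eval_X, ← hp, ← hq]
    ring

lemma iteratedDeriv_polynomial_eval (q : ℝ[X]) (n : ℕ) :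
    iteratedDeriv n (fun y => q.eval y) = fun y => (derivative^[n] q).eval y := by
  induction n with
  | zero => simp
  | succ n ih =>
    ext y
    rw [iteratedDeriv_succ, ih, Polynomial.deriv, Function.iterate_succ_apply']

lemma iteratedDeriv_eval_div_self {p : ℝ[X]} {m : ℕ} (hp : p.natDegree ≤ m) {x : ℝ}
    (hx : x ≠ 0) :
    iteratedDeriv m (fun y => p.eval y / y) x = (-1) ^ m * m ! * p.eval 0 * x ^ (-1 - m : ℤ) := by
  have hsplit : (fun y => p.eval y / y) =ᶠ[𝓝 x] fun y => p.eval 0 * y⁻¹ + (divX p).eval y := by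
    filter_upwards [isOpen_ne.mem_nhds hx] with y hy
    conv_lhs => rw [← divX_mul_X_add p]
    simp only [coeff_zero_eq_eval_zero, eval_add, eval_mul, eval_X, eval_C]
    field_simp
    ring
  have hdeg : (divX p).degree < m := by
    rcases eq_or_ne p 0 with rfl | hp0
    · simp
    · exact (degree_divX_lt hp0).trans_le (degree_le_natDegree.trans (by exact_mod_cast hp))
  rw [hsplit.iteratedDeriv_eq, iteratedDeriv_fun_add (contDiffAt_const.mul (contDiffAt_inv ℝ hx))
    (by simpa using ((divX p).contDiff_aeval (𝕜 := ℝ) m).contDiffAt),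
    iteratedDeriv_const_mul_field, iteratedDeriv_polynomial_eval,
    iterate_derivative_eq_zero_of_degree_lt hdeg, iteratedDeriv_eq_iterate,
    iter_deriv_inv]
  simp only [Int.reduceNeg, eval_zero, add_zero]
  ring

lemma jacobiWeight_mul_iteratedDeriv_jacobiWeight (a b : ℝ) (m : ℕ) {x : ℝ} (hx : x ∈ Ioo 0 1) :
    jacobiWeight (m - a - 1) (m - b) x * iteratedDeriv m (jacobiWeight a b) x =
      (rodriguesPoly a b m).eval x / x := by
  rw [iteratedDeriv_jacobiWeight a b m hx, ← mul_assoc, jacobiWeight_mul hx,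
    show (m : ℝ) - a - 1 + (a - m) = -1 by ring, show (m : ℝ) - b + (b - m) = 0 by ring]
  simp [jacobiWeight, div_eq_inv_mul, rpow_neg_one]

theorem integral_jacobiWeight_mul_iteratedDeriv_sq {a b : ℝ} {m : ℕ} (ha : 0 < a - m)
    (hb : -1 < b - m) :
    ∫ x in 0..1, jacobiWeight (m - a - 1) (m - b) x * iteratedDeriv m (jacobiWeight a b) x ^ 2 =
      m ! * Gamma (a + 1) * Gamma (b + 1) / ((a - m) * Gamma (a + b - m + 1)) := by
  set W := iteratedDeriv m (jacobiWeight a b)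
  set g := jacobiWeight (m - a - 1) (m - b) * W
  have hg : IsBetaSum (m - a - 1 + (a - m)) (m - b + (b - m)) g :=
    (isBetaSum_jacobiWeight _ _).mul ((isBetaSum_jacobiWeight a b).iteratedDeriv m)
  have hg_eq : EqOn g (fun y => (rodriguesPoly a b m).eval y / y) (Ioo 0 1) :=
    fun y hy => jacobiWeight_mul_iteratedDeriv_jacobiWeight a b m hy
  have hDg : EqOn (fun x => iteratedDeriv m g x * jacobiWeight a b x)
      (fun x => (-1) ^ m * m ! * ffall a m * jacobiWeight (a - m - 1) b x) (Ioo 0 1) := by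
    intro x hx
    have hpow : x ^ (-1 - m : ℤ) = jacobiWeight (-1 - m) 0 x := by
      simp [jacobiWeight, ← rpow_intCast]
    dsimp only
    rw [hg_eq.iteratedDeriv_of_isOpen isOpen_Ioo m hx,
      iteratedDeriv_eval_div_self (natDegree_rodriguesPoly_le a b m) hx.1.ne',
      rodriguesPoly_eval_zero, hpow, mul_assoc, jacobiWeight_mul hx]
    ring_nf
  have hsign : ((-1 : ℝ) ^ m) * (-1) ^ m = 1 := by rw [← mul_pow]; simp
  calc
    _ = ∫ x in 0..1, g x * W x := by simp only [g, Pi.mul_apply]; ring_nf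
    _ = (-1) ^ m * ∫ x in 0..1, iteratedDeriv m g x * jacobiWeight a b x :=
      (isBetaSum_jacobiWeight a b).integral_mul_iteratedDeriv hg m (by linarith) (by linarith)
    _ = (-1) ^ m * ((-1) ^ m * m ! * ffall a m * ∫ x in 0..1, jacobiWeight (a - m - 1) b x) := by
      rw [intervalIntegral.integral_congr_Ioo_of_le zero_le_one hDg,
        intervalIntegral.integral_const_mul]
    _ = ((-1) ^ m * (-1) ^ m) * m ! * (ffall a m * Gamma (a - m)) * Gamma (b + 1) /
          Gamma (a + b - m + 1) := by
      rw [integral_jacobiWeight (by linarith) (by linarith), sub_add_cancel,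
        show a - m - 1 + b + 2 = a + b - m + 1 by ring]
      ring
    _ = _ := by
      rw [hsign, ffall_mul_Gamma_sub ha]
      field_simp

lemma jacobiWeight_mul_sq_altJacobi (α β : ℝ) {n k : ℕ} (hk : k ≤ n) {x : ℝ}
    (hx : x ∈ Ioo 0 1) :
    x ^ α * (1 - x) ^ β * altJacobi α β n k x ^ 2 = (((n - k)! : ℝ) ^ 2)⁻¹ *
      (jacobiWeight ((n - k : ℕ) - (α + n + k + 1) - 1) ((n - k : ℕ) - (β + n - k)) x *
        iteratedDeriv (n - k) (jacobiWeight (α + n + k + 1) (β + n - k)) x ^ 2) := by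
  have hfun : (fun y : ℝ => y ^ (α + n + k + 1 : ℝ) * (1 - y) ^ (β + n - k : ℝ)) =
      jacobiWeight (α + n + k + 1) (β + n - k) := rfl
  rw [altJacobi, hfun]
  generalize iteratedDeriv (n - k) (jacobiWeight (α + n + k + 1) (β + n - k)) x = w
  calc
    _ = (((n - k)! : ℝ) ^ 2)⁻¹ * (jacobiWeight α β x * jacobiWeight (-α - k - 1) (-β) x *
        jacobiWeight (-α - k - 1) (-β) x * w ^ 2) := by
      simp only [jacobiWeight]
      ring
    _ = _ := by
      rw [jacobiWeight_mul hx, jacobiWeight_mul hx]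
      congr 3 <;> push_cast [Nat.cast_sub hk] <;> ring

theorem stmt_4 (n k : ℕ) (hk : k ≤ n) (α β : ℝ) (hα : α > -1) (hβ : β > -1) :
    ∫ x in (0 : ℝ)..1,
      x ^ α * (1 - x) ^ β * (altJacobi α β n k x) ^ 2 =
        (1 / (α + 2 * k + 1)) *
          (Real.Gamma (α + n + k + 2) * Real.Gamma (β + n - k + 1) /
            ((n - k).factorial * Real.Gamma (α + β + n + k + 2))) := by
  have hm : ((n - k : ℕ) : ℝ) = n - k := Nat.cast_sub hk
  have hk0 : (0 : ℝ) ≤ k := k.cast_nonneg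
  rw [intervalIntegral.integral_congr_Ioo_of_le zero_le_one
      fun x hx => jacobiWeight_mul_sq_altJacobi α β hk hx, intervalIntegral.integral_const_mul,
    integral_jacobiWeight_mul_iteratedDeriv_sq (by rw [hm]; linarith) (by rw [hm]; linarith), hm]
  rw [show α + n + k + 1 + 1 = α + n + k + 2 by ring,
    show α + n + k + 1 + (β + n - k) - (n - k) + 1 = α + β + n + k + 2 by ring,
    show α + n + k + 1 - (n - k) = α + 2 * k + 1 by ring]
  field_simp
end

section
/- For integers 0 ≤ k < n, the alternative Jacobi polynomials satisfy the differentiation formula: d/dx P_{nk}^{(α,β)}(x) - k x^{-1} P_{nk}^{(α,β)}(x) = -(α+β+n+k+2) P_{n-1,k}^{(α+1,β+1)}(x). -/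
open Real MeasureTheory

/-!
For `w = x^a (1-x)^b` the logarithmic derivative gives `x(1-x) w' = (a(1-x) - bx) w`;
differentiating this `m` times yields a three-term recurrence linking `x(1-x) w^{(m+1)}`,
`w^{(m)}` and `w^{(m-1)}`. With `a = α+n+k+1`, `b = β+n-k` and `m = n-k`, the Rodrigues formula
is `P_{nk} = x^{-α-k-1}(1-x)^{-β} w^{(m)}/m!`. Differentiating it, the derivative of the prefactor
and the recurrence combine so that the `w^{(m)}` terms reduce to `k x^{-1} P_{nk}`, while the
`w^{(m-1)}` term is `P_{n-1,k}^{(α+1,β+1)}`: its exponents `a, b` are the same, and its prefactor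
carries the extra factor `1/(x(1-x))`.
-/

open scoped ContDiff

theorem ContDiffOn.hasDerivAt_iteratedDeriv {𝕜 F : Type*} [NontriviallyNormedField 𝕜]
    [NormedAddCommGroup F] [NormedSpace 𝕜 F] {f : 𝕜 → F} {s : Set 𝕜}
    (hf : ContDiffOn 𝕜 ∞ f s) (hs : IsOpen s) {x : 𝕜} (hx : x ∈ s) (m : ℕ) :
    HasDerivAt (iteratedDeriv m f) (iteratedDeriv (m + 1) f x) x := by
  have hm : ContDiffOn 𝕜 ∞ (iteratedDeriv m f) s := by
    induction m with
    | zero => simpa only [iteratedDeriv_zero] using hf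
    | succ m ih =>
      rw [iteratedDeriv_succ]
      exact ih.deriv_of_isOpen hs le_rfl
  rw [iteratedDeriv_succ]
  exact ((hm.differentiableOn (by simp) x hx).differentiableAt (hs.mem_nhds hx)).hasDerivAt

noncomputable def powWeight (a b y : ℝ) : ℝ := y ^ a * (1 - y) ^ b

namespace powWeight

variable {a b x : ℝ}

theorem contDiffOn : ContDiffOn ℝ ∞ (powWeight a b) (Set.Ioo 0 1) := by
  intro y hy
  have h1 : 1 - y ≠ 0 := by linarith [hy.2]
  refine ContDiffAt.contDiffWithinAt (.mul ?_ ?_)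
  · exact contDiffAt_rpow_const_of_ne hy.1.ne'
  · exact (contDiffAt_rpow_const_of_ne h1).comp y (contDiffAt_const.sub contDiffAt_id)

theorem hasDerivAt (hx : x ∈ Set.Ioo (0 : ℝ) 1) :
    HasDerivAt (powWeight a b) ((a / x - b / (1 - x)) * powWeight a b x) x := by
  have hx0 : x ≠ 0 := hx.1.ne'
  have hx1 : 1 - x ≠ 0 := by linarith [hx.2]
  have h : HasDerivAt (fun y => y ^ a * (1 - y) ^ b)
      (a * x ^ (a - 1) * (1 - x) ^ b + x ^ a * (b * (1 - x) ^ (b - 1) * -1)) x :=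
    (hasDerivAt_rpow_const (Or.inl hx0)).mul
      ((hasDerivAt_rpow_const (Or.inl hx1)).comp x ((hasDerivAt_id x).const_sub 1))
  refine h.congr_deriv ?_
  rw [powWeight, rpow_sub_one hx0, rpow_sub_one hx1]
  field_simp
  ring

theorem sub_one_sub_one (hx : x ∈ Set.Ioo (0 : ℝ) 1) :
    powWeight (a - 1) (b - 1) x = powWeight a b x / (x * (1 - x)) := by
  have hx1 : 1 - x ≠ 0 := by linarith [hx.2]
  rw [powWeight, powWeight, rpow_sub_one hx.1.ne', rpow_sub_one hx1]
  field_simp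

theorem hasDerivAt_iteratedDeriv (m : ℕ) (hx : x ∈ Set.Ioo (0 : ℝ) 1) :
    HasDerivAt (iteratedDeriv m (powWeight a b)) (iteratedDeriv (m + 1) (powWeight a b) x) x :=
  contDiffOn.hasDerivAt_iteratedDeriv isOpen_Ioo hx m

/-- At `m = 0` the truncated index `m - 1` only occurs with the coefficient `m = 0`. -/
theorem iteratedDeriv_recurrence (a b : ℝ) (m : ℕ) :
    ∀ x ∈ Set.Ioo (0 : ℝ) 1, x * (1 - x) * iteratedDeriv (m + 1) (powWeight a b) x =
      (a - m - (a + b - 2 * m) * x) * iteratedDeriv m (powWeight a b) x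
        - m * (a + b - m + 1) * iteratedDeriv (m - 1) (powWeight a b) x := by
  set f := powWeight a b
  induction m with
  | zero =>
    intro x hx
    have hx1 : 1 - x ≠ 0 := by linarith [hx.2]
    rw [zero_add, iteratedDeriv_one, (hasDerivAt hx).deriv, iteratedDeriv_zero]
    field_simp [hx.1.ne']
    ring
  | succ m ih =>
    intro x hx
    have hL : HasDerivAt (fun t => t * (1 - t) * iteratedDeriv (m + 1) f t)
        ((1 * (1 - x) + x * -1) * iteratedDeriv (m + 1) f x
          + x * (1 - x) * iteratedDeriv (m + 2) f x) x :=
      ((hasDerivAt_id x).mul ((hasDerivAt_id x).const_sub 1)).mul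
        (hasDerivAt_iteratedDeriv (m + 1) hx)
    have hR : HasDerivAt (fun t => (a - m - (a + b - 2 * m) * t) * iteratedDeriv m f t
          - m * (a + b - m + 1) * iteratedDeriv (m - 1) f t)
        (-((a + b - 2 * m) * 1) * iteratedDeriv m f x
          + (a - m - (a + b - 2 * m) * x) * iteratedDeriv (m + 1) f x
          - m * (a + b - m + 1) * iteratedDeriv (m - 1 + 1) f x) x :=
      ((((hasDerivAt_id x).const_mul _).const_sub _).mul (hasDerivAt_iteratedDeriv m hx)).sub
        ((hasDerivAt_iteratedDeriv (m - 1) hx).const_mul _)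
    have hev : (fun t => t * (1 - t) * iteratedDeriv (m + 1) f t) =ᶠ[nhds x]
        (fun t => (a - m - (a + b - 2 * m) * t) * iteratedDeriv m f t
          - m * (a + b - m + 1) * iteratedDeriv (m - 1) f t) :=
      Filter.eventually_of_mem (isOpen_Ioo.mem_nhds hx) ih
    have key := hL.unique (hR.congr_of_eventuallyEq hev)
    have hshift : (m : ℝ) * iteratedDeriv (m - 1 + 1) f x = m * iteratedDeriv m f x := by
      rcases m with _ | m <;> simp
    simp only [Nat.add_sub_cancel]
    push_cast
    linear_combination key - (a + b - m + 1) * hshift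

end powWeight

theorem altJacobi_eq_powWeight {α β : ℝ} {n k m : ℕ} (h : n = k + m) :
    altJacobi α β n k = fun x => powWeight (-α - k - 1) (-β) x / m.factorial *
      iteratedDeriv m (powWeight (α + 2 * k + m + 1) (β + m)) x := by
  subst h
  have ha : (α + ↑(k + m) + k + 1 : ℝ) = α + 2 * k + m + 1 := by push_cast; ring
  have hb : (β + ↑(k + m) - k : ℝ) = β + m := by push_cast; ring
  funext x
  rw [altJacobi, Nat.add_sub_cancel_left, ha, hb]
  rfl

theorem stmt_11_general (n k : ℕ) (hk : k < n) (α β : ℝ)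
    (x : ℝ) (hx : x ∈ Set.Ioo (0 : ℝ) 1) :
    deriv (altJacobi α β n k) x - (k : ℝ) * x⁻¹ * altJacobi α β n k x =
      -(α + β + n + k + 2) * altJacobi (α + 1) (β + 1) (n - 1) k x := by
  obtain ⟨m, rfl⟩ : ∃ m, n = k + (m + 1) := ⟨n - k - 1, by omega⟩
  have hx1 : 1 - x ≠ 0 := by linarith [hx.2]
  rw [altJacobi_eq_powWeight rfl, altJacobi_eq_powWeight (m := m) (by omega)]
  beta_reduce
  have hF : powWeight (α + 1 + 2 * k + m + 1) (β + 1 + m) =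
      powWeight (α + 2 * k + ↑(m + 1) + 1) (β + ↑(m + 1)) := by
    congr 1 <;> push_cast <;> ring
  have hw : powWeight (-(α + 1) - k - 1) (-(β + 1)) x =
      powWeight (-α - k - 1) (-β) x / (x * (1 - x)) := by
    rw [← powWeight.sub_one_sub_one hx]
    congr 1 <;> ring
  have hD : HasDerivAt (fun y => powWeight (-α - k - 1) (-β) y / ((m + 1).factorial : ℝ) *
      iteratedDeriv (m + 1) (powWeight (α + 2 * k + ↑(m + 1) + 1) (β + ↑(m + 1))) y) _ x :=
    ((powWeight.hasDerivAt hx).div_const _).mul (powWeight.hasDerivAt_iteratedDeriv (m + 1) hx)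
  rw [hD.deriv, hF, hw]
  have hrec :=
    powWeight.iteratedDeriv_recurrence (α + 2 * k + ↑(m + 1) + 1) (β + ↑(m + 1)) (m + 1) x hx
  rw [Nat.add_sub_cancel] at hrec
  set F := powWeight (α + 2 * k + ↑(m + 1) + 1) (β + ↑(m + 1))
  clear_value F
  rw [Nat.factorial_succ]
  push_cast at hrec ⊢
  field_simp [hx.1.ne']
  linear_combination powWeight (-α - k - 1) (-β) x * hrec

theorem stmt_11 (n k : ℕ) (hk : k < n) (α β : ℝ) (hα : α > -1) (hβ : β > -1)
    (x : ℝ) (hx : x ∈ Set.Ioo (0 : ℝ) 1) :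
    deriv (altJacobi α β n k) x - (k : ℝ) * x⁻¹ * altJacobi α β n k x =
      -(α + β + n + k + 2) * altJacobi (α + 1) (β + 1) (n - 1) k x :=
  stmt_11_general n k hk α β x hx
end

section
/- For integers 0 ≤ k ≤ n and 1 ≤ l ≤ n with k ≠ l, the A-kind polynomials satisfy ∫₀¹ (1/x) A_{nk}(x) A_{nl}(x) dx = 0, and for 1 ≤ k = l ≤ n the integral equals 1/(2k). -/
open Real MeasureTheory

/-- A-kind orthogonal polynomials. -/
noncomputable def aKind (n k : ℕ) (x : ℝ) : ℝ :=
  ∑ j ∈ Finset.range (n - k + 1),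
    (-1 : ℝ) ^ j * ((n - k).choose j : ℝ) * ((n + k + j).choose (n - k) : ℝ) * x ^ (k + j)

/-!
Put `N = n - k` and `t = k + m + 1`. Expanding `A_{nk}`, `∫₀¹ x^m A_{nk}(x) dx` is
`∑_j (-1)^j C(N,j) f(j) / (t + j)` with `f(X) = C(n + k + X, N)`, a polynomial of degree `N`.
Writing `f(j) = f(-t) + (t + j) q(j)` with `deg q < N`, the `q`-part is an `N`-th forward
difference of a polynomial of degree `< N`, hence zero, and the rest is `f(-t)` times the
`N`-th forward difference of `1 / (t + ·)`, namely `f(-t) N! / (t)_{N+1}`. Since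
`f(-t) = C(n - m - 1, N)`, `A_{nk}` is orthogonal to `x^k, …, x^{n-1}`. Expanding the factor
`A_{nl}(x) / x` into the monomials `x^{l+i-1}` gives the orthogonality relations; on the
diagonal only `x^{k-1}` survives, with coefficient `C(n + k, n - k)`.
-/

open Finset Polynomial Nat fwdDiff

theorem sum_range_alternating_choose_mul_eq_fwdDiff_iter {R : Type*} [CommRing R]
    (f : R → R) (N : ℕ) (y : R) :
    ∑ j ∈ range (N + 1), (-1 : R) ^ j * N.choose j * f (y + j) = (-1) ^ N * (Δ_[1])^[N] f y := by
  rw [fwdDiff_iter_eq_sum_shift, mul_sum]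
  refine sum_congr rfl fun j hj => ?_
  have hjN : j ≤ N := Nat.lt_succ_iff.mp (mem_range.mp hj)
  have hsign : (-1 : R) ^ N * (-1) ^ (N - j) = (-1) ^ j := by
    rw [← pow_add, show N + (N - j) = j + 2 * (N - j) by omega, pow_add, pow_mul]
    simp
  rw [nsmul_one, zsmul_eq_mul]
  push_cast
  rw [← hsign]
  ring

theorem Polynomial.sum_range_alternating_choose_mul_eval_eq_zero {R : Type*} [CommRing R]
    {q : R[X]} {N : ℕ} (hq : q.degree < N) :
    ∑ j ∈ range (N + 1), (-1 : R) ^ j * N.choose j * q.eval (j : R) = 0 := by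
  rcases eq_or_ne q 0 with rfl | hq0
  · simp
  have h := sum_range_alternating_choose_mul_eq_fwdDiff_iter q.eval N 0
  simp only [zero_add] at h
  rw [h, fwdDiff_iter_eq_zero_of_degree_lt ((natDegree_lt_iff_degree_lt hq0).mpr hq)]
  simp

theorem fwdDiff_iter_inv {𝕜 : Type*} [Field 𝕜] [LinearOrder 𝕜] [IsStrictOrderedRing 𝕜]
    (m : ℕ) {y : 𝕜} (hy : 0 < y) :
    (Δ_[1])^[m] (·⁻¹) y = (-1) ^ m * m ! / (ascPochhammer 𝕜 (m + 1)).eval y := by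
  induction m generalizing y with
  | zero => simp [ascPochhammer_one]
  | succ m ih =>
    have hy1 : 0 < y + 1 := by linarith
    have hP := ascPochhammer_pos (m + 1) y hy
    have hP1 := ascPochhammer_pos (m + 1) (y + 1) hy1
    have hright := ascPochhammer_succ_eval (m + 1) y
    have hleft : (ascPochhammer 𝕜 (m + 1 + 1)).eval y =
        y * (ascPochhammer 𝕜 (m + 1)).eval (y + 1) := by
      rw [ascPochhammer_succ_left, eval_mul, eval_X, eval_comp, eval_add, eval_X, eval_one]
    rw [Function.iterate_succ_apply', fwdDiff, ih hy, ih hy1, hleft, Nat.factorial_succ]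
    rw [hleft] at hright
    push_cast at hright ⊢
    field_simp
    linear_combination (-(-1 : 𝕜) ^ m) * hright

theorem sum_range_alternating_choose_div_add {𝕜 : Type*} [Field 𝕜] [LinearOrder 𝕜]
    [IsStrictOrderedRing 𝕜] (N : ℕ) {t : 𝕜} (ht : 0 < t) :
    ∑ j ∈ range (N + 1), (-1 : 𝕜) ^ j * N.choose j / (t + j) =
      N ! / (ascPochhammer 𝕜 (N + 1)).eval t := by
  have h := sum_range_alternating_choose_mul_eq_fwdDiff_iter (·⁻¹) N t
  rw [fwdDiff_iter_inv N ht, mul_div_assoc, ← mul_assoc, ← pow_add, Even.neg_one_pow ⟨N, rfl⟩,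
    one_mul] at h
  simpa only [div_eq_mul_inv] using h

theorem Polynomial.sum_range_alternating_choose_mul_eval_div_add {𝕜 : Type*} [Field 𝕜]
    [LinearOrder 𝕜] [IsStrictOrderedRing 𝕜] {f : 𝕜[X]} {N : ℕ} (hf : f.natDegree ≤ N) {t : 𝕜}
    (ht : 0 < t) :
    ∑ j ∈ range (N + 1), (-1 : 𝕜) ^ j * N.choose j * f.eval (j : 𝕜) / (t + j) =
      f.eval (-t) * N ! / (ascPochhammer 𝕜 (N + 1)).eval t := by
  obtain ⟨q, hq⟩ : X - C (-t) ∣ f - C (f.eval (-t)) := X_sub_C_dvd_sub_C_eval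
  have hq_deg : q.degree < N := by
    rcases eq_or_ne q 0 with rfl | hq0
    · exact WithBot.bot_lt_coe N
    have h : 1 + q.natDegree ≤ N := by
      rw [← natDegree_X_sub_C (-t), ← natDegree_mul (X_sub_C_ne_zero _) hq0, ← hq]
      exact (natDegree_sub_le _ _).trans (by simpa using hf)
    exact (natDegree_lt_iff_degree_lt hq0).mp (by omega)
  have hsplit : ∀ j : ℕ, f.eval (j : 𝕜) / (t + j) = f.eval (-t) / (t + j) + q.eval (j : 𝕜) := by
    intro j
    have hj : t + j ≠ 0 := by positivity
    have h := congrArg (eval (j : 𝕜)) hq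
    simp only [eval_sub, eval_mul, eval_C, eval_X, sub_neg_eq_add] at h
    field_simp
    linear_combination h
  simp_rw [mul_div_assoc, hsplit, mul_add, sum_add_distrib,
    sum_range_alternating_choose_mul_eval_eq_zero hq_deg, add_zero, ← mul_div_assoc,
    mul_comm _ (f.eval (-t)), mul_div_assoc, ← mul_sum, ← mul_div_assoc]
  rw [sum_range_alternating_choose_div_add N ht, mul_div_assoc]

theorem sum_range_alternating_choose_mul_choose_div_add {𝕜 : Type*} [Field 𝕜]
    [LinearOrder 𝕜] [IsStrictOrderedRing 𝕜] (N a : ℕ) {t : 𝕜} (ht : 0 < t) :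
    ∑ j ∈ range (N + 1), (-1 : 𝕜) ^ j * N.choose j * (N + a + j).choose N / (t + j) =
      (descPochhammer 𝕜 N).eval ((N + a : ℕ) - t) / (ascPochhammer 𝕜 (N + 1)).eval t := by
  set f : 𝕜[X] := (descPochhammer 𝕜 N).comp (X + C ((N + a : ℕ) : 𝕜))
  have hf_deg : f.natDegree ≤ N := by
    rw [natDegree_comp, descPochhammer_natDegree, natDegree_X_add_C, mul_one]
  have hf_eval : ∀ j : ℕ, f.eval (j : 𝕜) = N ! * (N + a + j).choose N := by
    intro j
    rw [eval_comp, eval_add, eval_X, eval_C, ← Nat.cast_add, add_comm (j : ℕ),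
      descPochhammer_eval_eq_descFactorial, Nat.descFactorial_eq_factorial_mul_choose]
    push_cast
    ring
  have h := sum_range_alternating_choose_mul_eval_div_add hf_deg ht
  simp only [hf_eval, f, eval_comp, eval_add, eval_X, eval_C] at h
  rw [neg_add_eq_sub] at h
  rw [← mul_left_inj' (by positivity : (N ! : 𝕜) ≠ 0), sum_mul]
  convert h using 1
  · refine sum_congr rfl fun j _ => by ring
  · ring

noncomputable def aKindCoeff (n k j : ℕ) : ℝ :=
  (-1) ^ j * (n - k).choose j * (n + k + j).choose (n - k)

theorem aKind_eq_sum (n k : ℕ) (x : ℝ) :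
    aKind n k x = ∑ j ∈ range (n - k + 1), aKindCoeff n k j * x ^ (k + j) :=
  rfl

theorem integral_pow_mul_aKind {n k : ℕ} (hk : k ≤ n) (m : ℕ) :
    ∫ x in (0 : ℝ)..1, x ^ m * aKind n k x =
      (descPochhammer ℝ (n - k)).eval ((n : ℝ) - m - 1) /
        (ascPochhammer ℝ (n - k + 1)).eval ((k + m + 1 : ℕ) : ℝ) := by
  have hmonomial : ∀ j : ℕ, ∫ x in (0 : ℝ)..1, aKindCoeff n k j * x ^ (m + (k + j)) =
      aKindCoeff n k j / ((k + m + 1 : ℕ) + j) := by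
    intro j
    rw [intervalIntegral.integral_const_mul, integral_pow]
    push_cast
    ring
  simp_rw [aKind_eq_sum, mul_sum, ← mul_assoc, mul_comm (_ ^ m), mul_assoc, ← pow_add]
  rw [intervalIntegral.integral_finsetSum fun j _ =>
    (by fun_prop : Continuous _).intervalIntegrable _ _]
  simp_rw [hmonomial]
  convert sum_range_alternating_choose_mul_choose_div_add (𝕜 := ℝ) (n - k) (2 * k)
    (Nat.cast_pos.mpr (Nat.succ_pos (k + m))) using 3 with j
  · rw [aKindCoeff, show n - k + 2 * k + j = n + k + j by omega]
  · push_cast [show n - k + 2 * k = n + k by omega, Nat.cast_sub hk]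
    ring

theorem integral_pow_mul_aKind_eq_zero {n k m : ℕ} (hkm : k ≤ m) (hmn : m < n) :
    ∫ x in (0 : ℝ)..1, x ^ m * aKind n k x = 0 := by
  have hroot : (n : ℝ) - m - 1 = ((n - m - 1 : ℕ) : ℝ) := by
    rw [Nat.sub_sub, Nat.cast_sub (by omega : m + 1 ≤ n)]
    push_cast
    ring
  rw [integral_pow_mul_aKind (by omega), hroot, descPochhammer_eval_eq_descFactorial,
    Nat.descFactorial_of_lt (by omega), Nat.cast_zero, zero_div]

theorem integral_pow_mul_aKind_self {n k : ℕ} (hk1 : 1 ≤ k) (hk : k ≤ n) :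
    ∫ x in (0 : ℝ)..1, x ^ (k - 1) * aKind n k x = 1 / (2 * k * (n + k).choose (n - k)) := by
  have hroot : (n : ℝ) - (k - 1 : ℕ) - 1 = ((n - k : ℕ) : ℝ) := by
    push_cast [Nat.cast_sub hk, Nat.cast_sub hk1]
    ring
  have hpoch : (ascPochhammer ℝ (n - k + 1)).eval ((2 * k : ℕ) : ℝ) =
      2 * k * ((n - k) ! * (n + k).choose (n - k)) := by
    rw [ascPochhammer_succ_left, eval_mul, eval_X, eval_comp, eval_add, eval_X, eval_one,
      ← Nat.cast_succ, ascPochhammer_nat_eq_natCast_ascFactorial,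
      ← Nat.add_descFactorial_eq_ascFactorial, show 2 * k + (n - k) = n + k by omega,
      Nat.descFactorial_eq_factorial_mul_choose]
    push_cast
    ring
  have hchoose : ((n + k).choose (n - k) : ℝ) ≠ 0 := by
    exact_mod_cast (Nat.choose_pos (by omega)).ne'
  rw [integral_pow_mul_aKind hk, show k + (k - 1) + 1 = 2 * k by omega, hroot,
    descPochhammer_eval_eq_descFactorial, Nat.descFactorial_self, hpoch]
  field_simp

theorem integral_inv_mul_aKind_mul_aKind (n k : ℕ) {l : ℕ} (hl : 1 ≤ l) :
    ∫ x in (0 : ℝ)..1, 1 / x * aKind n k x * aKind n l x =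
      ∑ i ∈ range (n - l + 1), aKindCoeff n l i *
        ∫ x in (0 : ℝ)..1, x ^ (l + i - 1) * aKind n k x := by
  have hexpand : ∀ x : ℝ, x ≠ 0 → 1 / x * aKind n k x * aKind n l x =
      ∑ i ∈ range (n - l + 1), aKindCoeff n l i * (x ^ (l + i - 1) * aKind n k x) := by
    intro x hx
    rw [aKind_eq_sum n l, mul_sum]
    refine sum_congr rfl fun i _ => ?_
    obtain ⟨e, he⟩ : ∃ e, l + i = e + 1 := ⟨l + i - 1, by omega⟩
    rw [he, Nat.add_sub_cancel, pow_succ]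
    field_simp
  have hcont : Continuous (aKind n k) := by
    unfold aKind
    fun_prop
  rw [intervalIntegral.integral_congr_ae (g := fun x => ∑ i ∈ range (n - l + 1),
      aKindCoeff n l i * (x ^ (l + i - 1) * aKind n k x)) ?_,
    intervalIntegral.integral_finsetSum fun i _ =>
      (by fun_prop : Continuous _).intervalIntegrable _ _]
  · simp_rw [intervalIntegral.integral_const_mul]
  · refine Filter.Eventually.of_forall fun x hx => hexpand x ?_
    rw [Set.uIoc_of_le zero_le_one] at hx
    exact hx.1.ne'

theorem integral_inv_mul_aKind_mul_aKind_eq_zero {n k l : ℕ} (hkl : k < l) (hl : l ≤ n) :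
    ∫ x in (0 : ℝ)..1, 1 / x * aKind n k x * aKind n l x = 0 := by
  rw [integral_inv_mul_aKind_mul_aKind n k (by omega)]
  refine sum_eq_zero fun i hi => ?_
  rw [integral_pow_mul_aKind_eq_zero (by omega) (by have := mem_range.mp hi; omega), mul_zero]

theorem integral_inv_mul_aKind_mul_aKind_self {n k : ℕ} (hk1 : 1 ≤ k) (hk : k ≤ n) :
    ∫ x in (0 : ℝ)..1, 1 / x * aKind n k x * aKind n k x = 1 / (2 * k) := by
  rw [integral_inv_mul_aKind_mul_aKind n k hk1, sum_eq_single_of_mem 0 (by simp),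
    add_zero, integral_pow_mul_aKind_self hk1 hk]
  · have hchoose : ((n + k).choose (n - k) : ℝ) ≠ 0 := by
      exact_mod_cast (Nat.choose_pos (by omega)).ne'
    simp only [aKindCoeff, pow_zero, Nat.choose_zero_right, add_zero, Nat.cast_one, one_mul]
    field_simp
  · intro i hi hi0
    rw [integral_pow_mul_aKind_eq_zero (by omega) (by have := mem_range.mp hi; omega), mul_zero]

theorem stmt_13_general (n k l : ℕ) (hk : k ≤ n) (hl : l ≤ n) :
    (k ≠ l → ∫ x in (0 : ℝ)..1, (1 / x) * aKind n k x * aKind n l x = 0) ∧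
    (1 ≤ k → ∫ x in (0 : ℝ)..1, (1 / x) * aKind n k x * aKind n k x = 1 / (2 * k)) := by
  refine ⟨fun hkl => ?_, fun hk1 => integral_inv_mul_aKind_mul_aKind_self hk1 hk⟩
  rcases Nat.lt_or_gt_of_ne hkl with hlt | hgt
  · exact integral_inv_mul_aKind_mul_aKind_eq_zero hlt hl
  · simp_rw [mul_right_comm (1 / _) (aKind n k _)]
    exact integral_inv_mul_aKind_mul_aKind_eq_zero hgt hk

theorem stmt_13 (n k l : ℕ) (hk : k ≤ n) (hl1 : 1 ≤ l) (hl : l ≤ n) :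
    (k ≠ l → ∫ x in (0 : ℝ)..1, (1 / x) * aKind n k x * aKind n l x = 0) ∧
    (1 ≤ k → ∫ x in (0 : ℝ)..1, (1 / x) * aKind n k x * aKind n k x = 1 / (2 * k)) :=
  stmt_13_general n k l hk hl
end

section
/- For integers 1 ≤ k ≤ n, the A-kind polynomials satisfy ∫₀¹ (1/x) A_{nk}(x) dx = 1/k. -/
/-!
Dividing by `x` and integrating termwise turns the integral into
`∑ j, (-1)^j C(m, j) C(m + 2k + j, m) / (k + j)` with `m = n - k`. This sum does not depend
on `m`: with the certificate `wzCert` (found by Zeilberger's algorithm) the summands form a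
Wilf–Zeilberger pair, so the difference of the sums for `m + 1` and `m` telescopes to zero,
and for `m = 0` the sum is `1 / k`.
-/

open Real MeasureTheory

open Finset

section WilfZeilberger

variable {K : Type*} [Field K] [CharZero K]

theorem Nat.cast_choose_eq_succ_choose_mul_div {n r : ℕ} (h : r ≤ n + 1) :
    (n.choose r : K) = (n + 1).choose r * (n + 1 - r) / (n + 1) := by
  rw [eq_div_iff (Nat.cast_add_one_ne_zero n)]
  have := congrArg (Nat.cast (R := K)) (Nat.choose_mul_succ_eq n r)
  push_cast [Nat.cast_sub h] at this
  exact this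

theorem Nat.cast_choose_succ_right_eq_mul_div {n r : ℕ} (h : r ≤ n) :
    (n.choose (r + 1) : K) = n.choose r * (n - r) / (r + 1) := by
  rw [eq_div_iff (Nat.cast_add_one_ne_zero r)]
  have := congrArg (Nat.cast (R := K)) (Nat.choose_succ_right_eq n r)
  push_cast [Nat.cast_sub h] at this
  exact this

theorem Nat.cast_succ_choose_eq_mul_div {n r : ℕ} (h : r ≤ n) :
    ((n + 1).choose r : K) = n.choose r * (n + 1) / (n + 1 - r : ℕ) := by
  rw [eq_div_iff (by exact_mod_cast (by omega : n + 1 - r ≠ 0))]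
  exact_mod_cast (Nat.choose_mul_succ_eq n r).symm

theorem Nat.cast_succ_choose_succ_eq_mul_div (n r : ℕ) :
    ((n + 1).choose (r + 1) : K) = (n + 1) * n.choose r / (r + 1) := by
  rw [eq_div_iff (Nat.cast_add_one_ne_zero r)]
  exact_mod_cast (Nat.add_one_mul_choose_eq n r).symm

def wzTerm (k m j : ℕ) : K :=
  (-1) ^ j * m.choose j * (m + 2 * k + j).choose m / (k + j)

def wzCert (k m j : ℕ) : K :=
  (-1) ^ (j + 1) * (2 * j * (j + 2 * k)) * (m + 1).choose j * (m + 2 * k + j).choose m /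
    ((m + 1) ^ 2 * (m + 2 * k + 1))

theorem wzTerm_succ_sub_wzTerm {k m j : ℕ} (hk : 0 < k) (hj : j ≤ m + 1) :
    (wzTerm k (m + 1) j : K) - wzTerm k m j = wzCert k m (j + 1) - wzCert k m j := by
  have hkj : (k + j : K) ≠ 0 := by exact_mod_cast (by omega : k + j ≠ 0)
  have hm : (m + 1 : K) ≠ 0 := Nat.cast_add_one_ne_zero m
  have hj1 : (j + 1 : K) ≠ 0 := Nat.cast_add_one_ne_zero j
  have hmk : (m + 2 * k + 1 : K) ≠ 0 := by exact_mod_cast (by omega : m + 2 * k + 1 ≠ 0)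
  have hkj' : (2 * k + j + 1 : K) ≠ 0 := by exact_mod_cast (by omega : 2 * k + j + 1 ≠ 0)
  have hsub : m + 2 * k + j + 1 - m = 2 * k + j + 1 := by omega
  unfold wzTerm wzCert
  rw [show m + 1 + 2 * k + j = m + 2 * k + j + 1 by omega,
    show m + 2 * k + (j + 1) = m + 2 * k + j + 1 by omega,
    Nat.cast_choose_eq_succ_choose_mul_div hj,
    Nat.cast_choose_succ_right_eq_mul_div hj,
    Nat.cast_succ_choose_succ_eq_mul_div,
    Nat.cast_succ_choose_eq_mul_div (by omega : m ≤ m + 2 * k + j), hsub]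
  push_cast
  rw [pow_succ, pow_succ]
  field_simp
  ring

theorem sum_wzTerm {k : ℕ} (hk : 0 < k) (m : ℕ) :
    ∑ j ∈ range (m + 1), (wzTerm k m j : K) = 1 / k := by
  induction m with
  | zero => simp [wzTerm]
  | succ m ih =>
    have hcert_top : (wzCert k m (m + 2) : K) = 0 := by simp [wzCert]
    have hcert_zero : (wzCert k m 0 : K) = 0 := by simp [wzCert]
    have hterm_top : (wzTerm k m (m + 1) : K) = 0 := by simp [wzTerm]
    calc ∑ j ∈ range (m + 2), (wzTerm k (m + 1) j : K)
        = ∑ j ∈ range (m + 2), (wzTerm k m j + (wzCert k m (j + 1) - wzCert k m j)) :=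
          sum_congr rfl fun j hj =>
            eq_add_of_sub_eq' (wzTerm_succ_sub_wzTerm hk (by simpa [Nat.lt_succ_iff] using hj))
      _ = 1 / k := by
          rw [sum_add_distrib, sum_range_sub, sum_range_succ, ih, hcert_top, hcert_zero,
            hterm_top]
          ring

end WilfZeilberger

theorem integral_one_div_mul_sum_pow (c : ℕ → ℝ) {k : ℕ} (hk : 0 < k) (N : ℕ) :
    ∫ x in (0 : ℝ)..1, 1 / x * ∑ j ∈ range N, c j * x ^ (k + j) =
      ∑ j ∈ range N, c j / (k + j) := by
  have hdiv : ∀ x : ℝ, x ≠ 0 →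
      1 / x * ∑ j ∈ range N, c j * x ^ (k + j) = ∑ j ∈ range N, c j * x ^ (k - 1 + j) := by
    intro x hx
    rw [mul_sum]
    refine sum_congr rfl fun j _ => ?_
    rw [show k + j = k - 1 + j + 1 by omega, pow_succ]
    field_simp
  rw [intervalIntegral.integral_congr_ae (Filter.Eventually.of_forall fun x hx =>
      hdiv x (Set.uIoc_of_le (zero_le_one' ℝ) ▸ hx).1.ne'),
    intervalIntegral.integral_finsetSum fun j _ =>
      (intervalIntegral.intervalIntegrable_pow _).const_mul _]
  refine sum_congr rfl fun j _ => ?_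
  rw [intervalIntegral.integral_const_mul, integral_pow]
  push_cast [Nat.cast_sub (Nat.one_le_iff_ne_zero.mpr hk.ne')]
  ring_nf

theorem stmt_14 (n k : ℕ) (hk1 : 1 ≤ k) (hk : k ≤ n) :
    ∫ x in (0 : ℝ)..1, (1 / x) * aKind n k x = 1 / k := by
  have hidx : ∀ j, n + k + j = n - k + 2 * k + j := fun j => by omega
  unfold aKind
  rw [integral_one_div_mul_sum_pow _ hk1, ← sum_wzTerm hk1 (n - k)]
  refine sum_congr rfl fun j _ => ?_
  rw [wzTerm, hidx]
end

section
/- For integers 1 ≤ k ≤ n-1 and x ∈ (0,1], the A-kind polynomials satisfy the three-term recurrence (2k+1)(n+k)(n-k+1) A_{n,k-1}(x) = 2k[(2k-1)(2k+1)x^{-1} - 2(n²+k²+n)] A_{nk}(x) - (2k-1)(n-k)(n+k+1) A_{n,k+1}(x), together with A_{nn}(x) = x^n and A_{n,n-1}(x) = (2n-1)x^{n-1} - 2n x^n. -/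
open Real MeasureTheory

/-!
The coefficient of `x ^ i` in `A_{nk}(x)` is `(-1)^(i-k) (n+i)! / ((n-i)! (i-k)! (i+k)!)`.
Reading `1/m!` as `0` for negative `m`, this formula holds for every `i`, and
`1/(m-1)! = m/m!` holds for every integer `m`. Hence, after multiplying the recurrence by `x`,
comparing coefficients of `x^(i+1)` reduces it, uniformly in `i` and with no boundary cases,
to a polynomial identity in `n`, `k`, `i`.
-/

open Finset Nat

noncomputable def invFact (m : ℤ) : ℝ :=
  if 0 ≤ m then ((m.toNat)! : ℝ)⁻¹ else 0

theorem invFact_natCast (m : ℕ) : invFact m = (m ! : ℝ)⁻¹ := by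
  simp [invFact]

theorem invFact_of_neg {m : ℤ} (hm : m < 0) : invFact m = 0 := by
  simp [invFact, not_le.2 hm]

theorem invFact_sub_one (m : ℤ) : invFact (m - 1) = m * invFact m := by
  rcases lt_trichotomy m 0 with hm | rfl | hm
  · simp [invFact_of_neg hm, invFact_of_neg (show m - 1 < 0 by omega)]
  · simp [invFact_of_neg (show (-1 : ℤ) < 0 by omega)]
  · obtain ⟨p, rfl⟩ : ∃ p : ℕ, m = p + 1 := ⟨(m - 1).toNat, by omega⟩
    rw [add_sub_cancel_right, invFact_natCast, ← Nat.cast_succ, invFact_natCast,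
      Nat.factorial_succ]
    push_cast
    field_simp

theorem invFact_sub_two (m : ℤ) : invFact (m - 2) = (m - 1) * m * invFact m := by
  rw [show m - 2 = m - 1 - 1 by ring, invFact_sub_one, invFact_sub_one]
  push_cast
  ring

/-- The arguments of `invFact` are integers, so `n - i` and `i - k` are not truncated. -/
noncomputable def aCoeff (n k i : ℕ) : ℝ :=
  (-1) ^ (i + k) * ((n + i)! : ℝ) * invFact (n - i) * invFact (i - k) * invFact (i + k)

theorem aCoeff_of_lt {n k i : ℕ} (h : i < k) : aCoeff n k i = 0 := by
  simp [aCoeff, invFact_of_neg (show (i : ℤ) - k < 0 by omega)]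

theorem aCoeff_of_gt {n k i : ℕ} (h : n < i) : aCoeff n k i = 0 := by
  simp [aCoeff, invFact_of_neg (show (n : ℤ) - i < 0 by omega)]

theorem aCoeff_add_add (k j r : ℕ) :
    aCoeff (k + (j + r)) k (k + j) =
      (-1) ^ j * ((j + r).choose j : ℝ) * ((k + (j + r) + k + j).choose (j + r) : ℝ) := by
  have hr : ((k + (j + r) : ℕ) : ℤ) - (k + j : ℕ) = r := by push_cast; ring
  have hj : ((k + j : ℕ) : ℤ) - k = j := by push_cast; ring
  have hs : ((k + j : ℕ) : ℤ) + k = (2 * k + j : ℕ) := by push_cast; ring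
  have hc₁ := Nat.cast_add_choose ℝ (a := j) (b := r)
  have hc₂ := Nat.cast_add_choose ℝ (a := j + r) (b := 2 * k + j)
  rw [show k + (j + r) + k + j = j + r + (2 * k + j) by ring, hc₂, hc₁, aCoeff, hr, hj, hs,
    invFact_natCast, invFact_natCast, invFact_natCast,
    show k + (j + r) + (k + j) = j + r + (2 * k + j) by ring,
    show k + j + k = j + 2 * k by ring, pow_add, pow_mul]
  field_simp
  norm_num

theorem aKind_eq_sum_aCoeff {n k N : ℕ} (hk : k ≤ n) (hN : n + 1 ≤ N) (x : ℝ) :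
    aKind n k x = ∑ i ∈ range N, aCoeff n k i * x ^ i := by
  obtain ⟨m, rfl⟩ := Nat.exists_eq_add_of_le hk
  obtain ⟨r, rfl⟩ := Nat.exists_eq_add_of_le hN
  rw [show k + m + 1 + r = k + (m + 1 + r) by ring, sum_range_add, sum_range_add,
    sum_eq_zero fun i hi => by rw [aCoeff_of_lt (mem_range.1 hi), zero_mul],
    sum_eq_zero (s := range r) fun i _ => by rw [aCoeff_of_gt (by omega), zero_mul],
    zero_add, add_zero, aKind, Nat.add_sub_cancel_left]
  refine sum_congr rfl fun j hj => ?_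
  obtain ⟨t, rfl⟩ := Nat.exists_eq_add_of_le (Nat.le_of_lt_succ (mem_range.1 hj))
  rw [aCoeff_add_add]

theorem aCoeff_recurrence (n k i : ℕ) :
    (2 * (k : ℝ) + 3) * (n + k + 1) * (n - k) * aCoeff n k i =
      2 * ((k : ℝ) + 1) * (2 * k + 1) * (2 * k + 3) * aCoeff n (k + 1) (i + 1) -
        4 * ((k : ℝ) + 1) * (n ^ 2 + (k + 1) ^ 2 + n) * aCoeff n (k + 1) i -
        (2 * (k : ℝ) + 1) * (n - k - 1) * (n + k + 2) * aCoeff n (k + 2) i := by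
  have h₁ : invFact ((n : ℤ) - (i + 1 : ℕ)) = (n - i) * invFact (n - i) := by
    convert invFact_sub_one ((n : ℤ) - i) using 2 <;> push_cast <;> ring
  have h₂ : invFact ((i : ℤ) - (k + 1 : ℕ)) = (i - k) * invFact (i - k) := by
    convert invFact_sub_one ((i : ℤ) - k) using 2 <;> push_cast <;> ring
  have h₃ : invFact ((i : ℤ) - (k + 2 : ℕ)) = (i - k - 1) * (i - k) * invFact (i - k) := by
    convert invFact_sub_two ((i : ℤ) - k) using 2 <;> push_cast <;> ring
  have h₄ : invFact ((i : ℤ) + k) = (i + k + 1) * (i + k + 2) * invFact (i + k + 2) := by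
    convert invFact_sub_two ((i : ℤ) + k + 2) using 2 <;> push_cast <;> ring
  have h₅ : invFact ((i : ℤ) + (k + 1 : ℕ)) = (i + k + 2) * invFact (i + k + 2) := by
    convert invFact_sub_one ((i : ℤ) + k + 2) using 2 <;> push_cast <;> ring
  have h₆ : invFact ((i + 1 : ℕ) - (k + 1 : ℕ)) = invFact (i - k) := by push_cast; ring_nf
  have h₇ : invFact ((i + 1 : ℕ) + (k + 1 : ℕ)) = invFact (i + k + 2) := by push_cast; ring_nf
  have h₈ : invFact ((i : ℤ) + (k + 2 : ℕ)) = invFact (i + k + 2) := by push_cast; ring_nf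
  simp only [aCoeff, h₁, h₂, h₃, h₄, h₅, h₆, h₇, h₈, show n + (i + 1) = n + i + 1 by ring,
    Nat.factorial_succ]
  push_cast
  ring

theorem aKind_recurrence {n k : ℕ} (hk : k + 2 ≤ n) {x : ℝ} (hx : x ≠ 0) :
    (2 * (k : ℝ) + 3) * (n + k + 1) * (n - k) * aKind n k x =
      2 * ((k : ℝ) + 1) * ((2 * k + 1) * (2 * k + 3) * x⁻¹ - 2 * (n ^ 2 + (k + 1) ^ 2 + n)) *
          aKind n (k + 1) x -
        (2 * (k : ℝ) + 1) * (n - k - 1) * (n + k + 2) * aKind n (k + 2) x := by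
  have hshift :
      aKind n (k + 1) x = ∑ i ∈ range (n + 1), aCoeff n (k + 1) (i + 1) * x ^ (i + 1) := by
    rw [aKind_eq_sum_aCoeff (N := n + 2) (by omega) (by omega), sum_range_succ',
      aCoeff_of_lt k.succ_pos, zero_mul, add_zero]
  apply mul_left_cancel₀ hx
  calc x * ((2 * (k : ℝ) + 3) * (n + k + 1) * (n - k) * aKind n k x)
      = ∑ i ∈ range (n + 1),
          (2 * (k : ℝ) + 3) * (n + k + 1) * (n - k) * aCoeff n k i * x ^ (i + 1) := by
        rw [aKind_eq_sum_aCoeff (by omega) le_rfl, mul_sum, mul_sum]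
        exact sum_congr rfl fun i _ => by ring
    _ = ∑ i ∈ range (n + 1),
          (2 * ((k : ℝ) + 1) * (2 * k + 1) * (2 * k + 3) *
              (aCoeff n (k + 1) (i + 1) * x ^ (i + 1)) -
            4 * ((k : ℝ) + 1) * (n ^ 2 + (k + 1) ^ 2 + n) * (aCoeff n (k + 1) i * x ^ i) * x -
            (2 * (k : ℝ) + 1) * (n - k - 1) * (n + k + 2) * (aCoeff n (k + 2) i * x ^ i) * x) := by
        refine sum_congr rfl fun i _ => ?_
        rw [aCoeff_recurrence]
        ring
    _ = _ := by
        simp only [sum_sub_distrib, ← mul_sum, ← sum_mul]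
        rw [← hshift, ← aKind_eq_sum_aCoeff (by omega) le_rfl, ← aKind_eq_sum_aCoeff hk le_rfl]
        field_simp
        ring

theorem aKind_self (n : ℕ) (x : ℝ) : aKind n n x = x ^ n := by
  simp [aKind]

theorem aKind_succ_self (m : ℕ) (x : ℝ) :
    aKind (m + 1) m x = (2 * (m : ℝ) + 1) * x ^ m - 2 * ((m : ℝ) + 1) * x ^ (m + 1) := by
  simp only [aKind, show m + 1 - m = 1 by omega, sum_range_succ, sum_range_zero,
    Nat.choose_zero_right, Nat.choose_one_right]
  push_cast
  ring

theorem stmt_15 (n k : ℕ) (hk1 : 1 ≤ k) (hk2 : k ≤ n - 1)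
    (x : ℝ) (hx : x ∈ Set.Ioc (0 : ℝ) 1) :
    (2 * (k : ℝ) + 1) * ((n : ℝ) + k) * ((n : ℝ) - k + 1) * aKind n (k - 1) x =
        2 * (k : ℝ) *
          ((2 * (k : ℝ) - 1) * (2 * (k : ℝ) + 1) * x⁻¹ -
            2 * ((n : ℝ) ^ 2 + (k : ℝ) ^ 2 + n)) * aKind n k x -
        (2 * (k : ℝ) - 1) * ((n : ℝ) - k) * ((n : ℝ) + k + 1) * aKind n (k + 1) x ∧
    aKind n n x = x ^ n ∧
    aKind n (n - 1) x = (2 * (n : ℝ) - 1) * x ^ (n - 1) - 2 * (n : ℝ) * x ^ n := by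
  obtain ⟨k, rfl⟩ := Nat.exists_eq_add_of_le' hk1
  obtain ⟨m, rfl⟩ := Nat.exists_eq_add_of_le' (show 1 ≤ n by omega)
  refine ⟨?_, aKind_self _ x, ?_⟩
  · have := aKind_recurrence (show k + 2 ≤ m + 1 by omega) hx.1.ne'
    simp only [Nat.add_sub_cancel] at this ⊢
    push_cast at this ⊢
    linear_combination this
  · rw [Nat.add_sub_cancel, aKind_succ_self]
    push_cast
    ring
end
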